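/- arXiv:1212.3036 — 4 statements merged into one kernel-verified Lean document; each statement's English description precedes it below -/
import Mathlib

section
/- Suppose a three-cliqued claw-free graph (G,A,B,C) admits a hex-join into three-cliqued graphs (G1,A1,B1,C1) and (G2,A2,B2,C2). If T is a good triad in G1, then T is also a good triad in G. -/
open SimpleGraph

namespace Paper

variable {V : Type*} {W : Type*}

/-- A graph is claw-free if no vertex has three pairwise nonadjacent neighbours. -/
def ClawFree (G : SimpleGraph V) : Prop :=
  ¬ ∃ (v a b c : V), G.Adj v a ∧ G.Adj v b ∧ G.Adj v c ∧
      ¬G.Adj a b ∧ ¬G.Adj a c ∧ ¬G.Adj b c ∧ a ≠ b ∧ a ≠ c ∧ b ≠ c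

/-- A graph is quasi-line if every neighbourhood is covered by two cliques. -/
def QuasiLine (G : SimpleGraph V) : Prop :=
  ∀ v : V, ∃ S T : Set V, G.IsClique S ∧ G.IsClique T ∧ G.neighborSet v ⊆ S ∪ T

/-- The clique number ω(G). -/
noncomputable def cliqueNum (G : SimpleGraph V) : ℕ :=
  sSup {n | ∃ s : Finset V, G.IsNClique n s}

/-- The clique number of the subgraph induced on a vertex set `S`. -/
noncomputable def cliqueNumOn (G : SimpleGraph V) (S : Set V) : ℕ :=
  sSup {n | ∃ s : Finset V, ↑s ⊆ S ∧ G.IsNClique n s}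

/-- ω(v): the maximum size of a clique containing `v`. -/
noncomputable def omegaAt (G : SimpleGraph V) (v : V) : ℕ :=
  sSup {n | ∃ s : Finset V, G.IsNClique n s ∧ v ∈ s}

/-- The degree of a vertex (as the cardinality of its neighbourhood). -/
noncomputable def degree' (G : SimpleGraph V) (v : V) : ℕ := (G.neighborSet v).ncard

/-- The maximum degree Δ(G). -/
noncomputable def maxDeg (G : SimpleGraph V) : ℕ := sSup {n | ∃ v : V, n = degree' G v}

/-- γ_ℓ(v) = ⌈(d(v)+1+ω(v))/2⌉. -/
noncomputable def gammaLocalAt (G : SimpleGraph V) (v : V) : ℕ :=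
  (degree' G v + 1 + omegaAt G v + 1) / 2

/-- γ_ℓ(G) = max over vertices of γ_ℓ(v). -/
noncomputable def gammaLocal (G : SimpleGraph V) : ℕ :=
  sSup {n | ∃ v : V, n = gammaLocalAt G v}

/-- The closed neighbourhood of a vertex. -/
def closedNbhd (G : SimpleGraph V) (v : V) : Set V := insert v (G.neighborSet v)

/-- The closed neighbourhood within an induced subgraph on `S`. -/
def closedNbhdOn (G : SimpleGraph V) (S : Set V) (v : V) : Set V := S ∩ closedNbhd G v

/-- A triad: three pairwise nonadjacent vertices. -/
def IsTriad (G : SimpleGraph V) (T : Finset V) : Prop :=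
  T.card = 3 ∧ ∀ u ∈ T, ∀ w ∈ T, u ≠ w → ¬G.Adj u w

/-- A good triad within the induced subgraph on `S`: every vertex of the induced subgraph
outside `T` has two neighbours in `T`, or a twin in `T`, or is trumped by a vertex of `T`. -/
def GoodTriadOn (G : SimpleGraph V) (S : Set V) (T : Finset V) : Prop :=
  ↑T ⊆ S ∧ IsTriad G T ∧
    ∀ v ∈ S, v ∉ T →
      (∃ t1 ∈ T, ∃ t2 ∈ T, t1 ≠ t2 ∧ G.Adj v t1 ∧ G.Adj v t2) ∨
      (∃ t ∈ T, closedNbhdOn G S v = closedNbhdOn G S t) ∨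
      (∃ t ∈ T, closedNbhdOn G S v ⊂ closedNbhdOn G S t)

/-- A good triad in `G`. -/
def GoodTriad (G : SimpleGraph V) (T : Finset V) : Prop := GoodTriadOn G Set.univ T

/-- A homogeneous pair of cliques within the induced subgraph on `S`. -/
def IsHomPairOn (G : SimpleGraph V) (S : Set V) (A B : Finset V) : Prop :=
  ↑A ⊆ S ∧ ↑B ⊆ S ∧ G.IsClique (↑A : Set V) ∧ G.IsClique (↑B : Set V) ∧
    A.Nonempty ∧ B.Nonempty ∧ Disjoint A B ∧ 3 ≤ A.card + B.card ∧
    ∀ v ∈ S, v ∉ A → v ∉ B →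
      ((∀ a ∈ A, G.Adj v a) ∨ (∀ a ∈ A, ¬G.Adj v a)) ∧
      ((∀ b ∈ B, G.Adj v b) ∨ (∀ b ∈ B, ¬G.Adj v b))

/-- A homogeneous pair of cliques in `G`. -/
def IsHomPair (G : SimpleGraph V) (A B : Finset V) : Prop := IsHomPairOn G Set.univ A B

/-- A homogeneous pair of cliques `(A,B)` is skeletal if deleting any single edge
between `A` and `B` strictly decreases the clique number of `G[A ∪ B]`. -/
def IsSkeletalPair (G : SimpleGraph V) (A B : Finset V) : Prop :=
  ∀ a ∈ A, ∀ b ∈ B, G.Adj a b →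
    cliqueNumOn (G.deleteEdges {s(a, b)}) (↑A ∪ ↑B) < cliqueNumOn G (↑A ∪ ↑B)

/-- A graph is skeletal if every homogeneous pair of cliques in it is skeletal. -/
def Skeletal (G : SimpleGraph V) : Prop :=
  ∀ A B : Finset V, IsHomPair G A B → IsSkeletalPair G A B

/-- A linear pair: no induced C₄ between `A` and `B`. -/
def IsLinearPair (G : SimpleGraph V) (A B : Finset V) : Prop :=
  ¬ ∃ a1 ∈ A, ∃ a2 ∈ A, ∃ b1 ∈ B, ∃ b2 ∈ B,
      G.Adj a1 b1 ∧ G.Adj a2 b2 ∧ ¬G.Adj a1 b2 ∧ ¬G.Adj a2 b1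

/-- A homogeneous clique. -/
def IsHomogeneousClique [Fintype V] (G : SimpleGraph V) (C : Finset V) : Prop :=
  G.IsClique (↑C : Set V) ∧ 2 ≤ C.card ∧ C.card ≤ Fintype.card V - 1 ∧
    ∀ v ∉ C, (∀ c ∈ C, G.Adj v c) ∨ (∀ c ∈ C, ¬G.Adj v c)

/-- `X` straddles the three-cliquing `(A,B,C)` if it meets more than one of `A`, `B`, `C`. -/
def Straddles (A B C : Set V) (X : Finset V) : Prop :=
  ((↑X ∩ A).Nonempty ∧ (↑X ∩ B).Nonempty) ∨
  ((↑X ∩ A).Nonempty ∧ (↑X ∩ C).Nonempty) ∨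
  ((↑X ∩ B).Nonempty ∧ (↑X ∩ C).Nonempty)

/-- A three-cliqued graph is weakly skeletal if every nonskeletal homogeneous pair
of cliques is straddling. -/
def WeaklySkeletal (G : SimpleGraph V) (A B C : Set V) : Prop :=
  ∀ X Y : Finset V, IsHomPair G X Y → ¬IsSkeletalPair G X Y →
    Straddles A B C X ∨ Straddles A B C Y

/-- A set of unordered pairs forming a matching (pairwise disjoint non-loop pairs). -/
def IsMatchingSet (M : Set (Sym2 W)) : Prop :=
  (∀ e ∈ M, ¬e.IsDiag) ∧ ∀ e ∈ M, ∀ e' ∈ M, e ≠ e' → ∀ w : W, w ∈ e → w ∉ e'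

/-- `G[D]` is a thickening of `H[R]` under the matching `M`, via the fiber map `f`. -/
structure IsThickeningBetween (H : SimpleGraph W) (M : Set (Sym2 W)) (R : Set W)
    (G : SimpleGraph V) (D : Set V) (f : V → W) : Prop where
  maps_into : ∀ v ∈ D, f v ∈ R
  fibers_nonempty : ∀ w ∈ R, ∃ v ∈ D, f v = w
  fibers_clique : ∀ w : W, G.IsClique {v | v ∈ D ∧ f v = w}
  adj_of_adj : ∀ u ∈ D, ∀ v ∈ D, f u ≠ f v → H.Adj (f u) (f v) → s(f u, f v) ∉ M → G.Adj u v
  nonadj_of_nonadj : ∀ u ∈ D, ∀ v ∈ D, f u ≠ f v → ¬H.Adj (f u) (f v) → ¬G.Adj u v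
  semi_adj : ∀ x ∈ R, ∀ y ∈ R, s(x, y) ∈ M →
    ∃ u ∈ D, ∃ v ∈ D, f u = x ∧ f v = y ∧ G.Adj u v
  semi_nonadj : ∀ x ∈ R, ∀ y ∈ R, s(x, y) ∈ M →
    ∃ u ∈ D, ∃ v ∈ D, f u = x ∧ f v = y ∧ ¬G.Adj u v

/-- `G` is a thickening of `H[R]` under `M`. -/
def IsThickeningOn (H : SimpleGraph W) (M : Set (Sym2 W)) (R : Set W)
    (G : SimpleGraph V) (f : V → W) : Prop :=
  IsThickeningBetween H M R G Set.univ f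

/-- `G` is a thickening of `H` under `M`. -/
def IsThickening (H : SimpleGraph W) (M : Set (Sym2 W)) (G : SimpleGraph V) (f : V → W) : Prop :=
  IsThickeningBetween H M Set.univ G Set.univ f

/-- A graph is antiprismatic if every vertex outside a triad has exactly two
neighbours in it. -/
def Antiprismatic (H : SimpleGraph W) : Prop :=
  ∀ T : Finset W, IsTriad H T → ∀ v ∉ T,
    ∃ t ∈ T, ¬H.Adj v t ∧ ∀ t' ∈ T, t' ≠ t → H.Adj v t'

/-- A changeable matching in an antiprismatic graph. -/
def ChangeableMatching (H : SimpleGraph W) (M : Set (Sym2 W)) : Prop :=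
  M ⊆ H.edgeSet ∧ IsMatchingSet M ∧ ∀ M' ⊆ M, Antiprismatic (H.deleteEdges M')



/-- The icosahedron `G0` on vertices `v0, …, v11`. -/
def icoG0 : SimpleGraph (Fin 12) :=
  SimpleGraph.fromRel (fun i j =>
    (1 ≤ i.val ∧ i.val ≤ 10 ∧ (j.val = i.val % 10 + 1 ∨ j.val = (i.val + 1) % 10 + 1)) ∨
    (i.val = 0 ∧ j.val % 2 = 1 ∧ 1 ≤ j.val ∧ j.val ≤ 10) ∨
    (i.val = 11 ∧ j.val % 2 = 0 ∧ 1 ≤ j.val ∧ j.val ≤ 10))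

/-- `G1 = G0 − v11`. -/
def icoG1 : SimpleGraph (Fin 11) :=
  SimpleGraph.fromRel (fun i j =>
    (1 ≤ i.val ∧ (j.val = i.val % 10 + 1 ∨ j.val = (i.val + 1) % 10 + 1)) ∨
    (i.val = 0 ∧ j.val % 2 = 1))

/-- `G2 = G1 − v10`. -/
def icoG2 : SimpleGraph (Fin 10) :=
  SimpleGraph.fromRel (fun i j =>
    (1 ≤ i.val ∧ (j.val = i.val % 10 + 1 ∨ j.val = (i.val + 1) % 10 + 1)) ∨
    (i.val = 0 ∧ j.val % 2 = 1))

/-- An icosahedral thickening: a proper thickening of `G0` or `G1`, or a thickening of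
`G2 ∪ M` under a matching `M ⊆ {v1v4, v6v9}`. -/
def IsIcosahedralThickening (G : SimpleGraph V) : Prop :=
  (∃ f : V → Fin 12, IsThickening icoG0 ∅ G f) ∨
  (∃ f : V → Fin 11, IsThickening icoG1 ∅ G f) ∨
  (∃ (M : Set (Sym2 (Fin 10))) (f : V → Fin 10),
      M ⊆ {s((1 : Fin 10), 4), s(6, 9)} ∧
      IsThickening (icoG2 ⊔ SimpleGraph.fromEdgeSet M) M G f)

/-! ### Antihat graphs -/

/-- The vertex type of the antihat base graph: `A = {a0,…,ak}`, `B = {b0,…,bk}`,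
`C = {c1,…,ck}` (the third component `i` encodes `c_{i+1}`). -/
abbrev AHV (k : ℕ) : Type := Fin (k + 1) ⊕ Fin (k + 1) ⊕ Fin k

def ahA {k : ℕ} (i : Fin (k + 1)) : AHV k := Sum.inl i
def ahB {k : ℕ} (i : Fin (k + 1)) : AHV k := Sum.inr (Sum.inl i)
def ahC {k : ℕ} (i : Fin k) : AHV k := Sum.inr (Sum.inr i)

/-- The antihat base graph `H`, where `e00` records whether `a0` and `b0` are adjacent. -/
def antihatH (k : ℕ) (e00 : Bool) : SimpleGraph (AHV k) :=
  SimpleGraph.fromRel (fun x y =>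
    match x, y with
    | Sum.inl _, Sum.inl _ => True
    | Sum.inr (Sum.inl _), Sum.inr (Sum.inl _) => True
    | Sum.inr (Sum.inr _), Sum.inr (Sum.inr _) => True
    | Sum.inl i, Sum.inr (Sum.inl j) =>
        (i = j ∧ 1 ≤ i.val) ∨ (i.val = 0 ∧ j.val = 0 ∧ e00 = true)
    | Sum.inl i, Sum.inr (Sum.inr j) => 1 ≤ i.val ∧ i.val ≠ j.val + 1
    | Sum.inr (Sum.inl i), Sum.inr (Sum.inr j) => 1 ≤ i.val ∧ i.val ≠ j.val + 1
    | _, _ => False)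

/-- The conditions on the matching `M` of an antihat thickening with deleted set `Xd`. -/
def AntihatM (k : ℕ) (e00 : Bool) (Xd : Finset (AHV k)) (M : Set (Sym2 (AHV k))) : Prop :=
  IsMatchingSet M ∧
  (∀ e ∈ M, ∀ w : AHV k, w ∈ e → w ∉ Xd) ∧
  (∀ i j : Fin (k + 1), s(ahA i, ahA j) ∉ M) ∧
  (∀ i j : Fin (k + 1), s(ahB i, ahB j) ∉ M) ∧
  (∀ i j : Fin k, s(ahC i, ahC j) ∉ M) ∧
  (e00 = true → s(ahA (0 : Fin (k + 1)), ahB (0 : Fin (k + 1))) ∈ M) ∧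
  (∀ i j : Fin (k + 1), 1 ≤ i.val → 1 ≤ j.val → s(ahA i, ahB j) ∈ M →
      i = j ∧ ∃ c : Fin k, c.val + 1 = i.val ∧ ahC c ∈ Xd) ∧
  (∀ i : Fin (k + 1), ∀ j : Fin k, 1 ≤ i.val → s(ahB i, ahC j) ∈ M →
      i.val = j.val + 1 ∧ ahA i ∈ Xd) ∧
  (∀ i : Fin (k + 1), ∀ j : Fin k, 1 ≤ i.val → s(ahA i, ahC j) ∈ M →
      i.val = j.val + 1 ∧ ahB i ∈ Xd)

/-! ### Strips and generalized 2-joins -/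

/-- The induced subgraph on `S` contains an induced `W5` (a 5-wheel). -/
def HasInducedW5On (G : SimpleGraph V) (S : Set V) : Prop :=
  ∃ w c0 c1 c2 c3 c4 : V,
    w ∈ S ∧ c0 ∈ S ∧ c1 ∈ S ∧ c2 ∈ S ∧ c3 ∈ S ∧ c4 ∈ S ∧
    G.Adj w c0 ∧ G.Adj w c1 ∧ G.Adj w c2 ∧ G.Adj w c3 ∧ G.Adj w c4 ∧
    G.Adj c0 c1 ∧ G.Adj c1 c2 ∧ G.Adj c2 c3 ∧ G.Adj c3 c4 ∧ G.Adj c4 c0 ∧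
    c0 ≠ c2 ∧ c0 ≠ c3 ∧ c1 ≠ c3 ∧ c1 ≠ c4 ∧ c2 ≠ c4 ∧
    ¬G.Adj c0 c2 ∧ ¬G.Adj c0 c3 ∧ ¬G.Adj c1 c3 ∧ ¬G.Adj c1 c4 ∧ ¬G.Adj c2 c4

/-- A generalized 2-join `((X1,Y1),(X2,Y2))` of `G` separating `V1` from `V2`,
with `X1, X2, Y1, Y2` pairwise disjoint except possibly `X1` and `Y1`. -/
structure IsGen2Join [Fintype V] [DecidableEq V] (G : SimpleGraph V)
    (V1 V2 X1 Y1 X2 Y2 : Finset V) : Prop where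
  disjV : Disjoint V1 V2
  unionV : V1 ∪ V2 = Finset.univ
  subX1 : X1 ⊆ V1
  subY1 : Y1 ⊆ V1
  subX2 : X2 ⊆ V2
  subY2 : Y2 ⊆ V2
  cliqueX : G.IsClique (↑X1 ∪ ↑X2 : Set V)
  cliqueY : G.IsClique (↑Y1 ∪ ↑Y2 : Set V)
  cross : ∀ u ∈ V1, ∀ v ∈ V2, G.Adj u v → (u ∈ X1 ∧ v ∈ X2) ∨ (u ∈ Y1 ∧ v ∈ Y2)
  disjX2Y2 : Disjoint X2 Y2

/-- ω'(v): the maximum size of a clique of `H2 = G[V2 ∪ X1 ∪ Y1]` containing `v`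
and not intersecting both `X1 ∖ Y1` and `Y1 ∖ X1`. -/
noncomputable def omegaJ [DecidableEq V] (G : SimpleGraph V) (V2 X1 Y1 : Finset V) (v : V) : ℕ :=
  sSup {n | ∃ s : Finset V, G.IsNClique n s ∧ v ∈ s ∧ s ⊆ V2 ∪ X1 ∪ Y1 ∧
      ¬((∃ x ∈ s, x ∈ X1 ∧ x ∉ Y1) ∧ ∃ y ∈ s, y ∈ Y1 ∧ y ∉ X1)}

/-- γ_ℓ^j(H2) = max over `v ∈ V2 ∪ X1 ∪ Y1` of ⌈(d_G(v)+1+ω'(v))/2⌉. -/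
noncomputable def gammaLJ [DecidableEq V] (G : SimpleGraph V) (V2 X1 Y1 : Finset V) : ℕ :=
  (V2 ∪ X1 ∪ Y1).sup fun v => (degree' G v + 1 + omegaJ G V2 X1 Y1 v + 1) / 2

/-- `(G[V2], X2, Y2)` is an antihat strip. -/
def IsAntihatStripOn (G : SimpleGraph V) (V2 X2 Y2 : Finset V) : Prop :=
  ∃ (k : ℕ) (e00 : Bool) (Xd : Finset (AHV k)) (M : Set (Sym2 (AHV k))) (f : V → AHV k),
    2 ≤ k ∧ ahA (0 : Fin (k + 1)) ∉ Xd ∧ ahB (0 : Fin (k + 1)) ∉ Xd ∧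
    (∃ i j : Fin k, i ≠ j ∧ ahC i ∉ Xd ∧ ahC j ∉ Xd) ∧
    AntihatM k e00 Xd M ∧
    IsThickeningBetween (antihatH k e00 ⊔ SimpleGraph.fromEdgeSet M) M
      ((↑Xd ∪ {ahA (0 : Fin (k + 1)), ahB (0 : Fin (k + 1))} : Set (AHV k))ᶜ)
      G (↑V2 : Set V) f ∧
    (↑X2 : Set V) = {v | v ∈ V2 ∧ ∃ i : Fin (k + 1), 1 ≤ i.val ∧ f v = ahA i ∧ ahA i ∉ Xd} ∧
    (↑Y2 : Set V) = {v | v ∈ V2 ∧ ∃ i : Fin (k + 1), 1 ≤ i.val ∧ f v = ahB i ∧ ahB i ∉ Xd} ∧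
    HasInducedW5On G (↑V2 : Set V)

/-- The base graph of strange strips, on `a1=0, a2=1, b1=2, b2=3, b3=4, c1=5, c2=6`. -/
def strangeH : SimpleGraph (Fin 7) :=
  SimpleGraph.fromEdgeSet
    {s(0, 1), s(2, 3), s(2, 4), s(3, 4), s(5, 6),
     s(0, 2), s(1, 5), s(3, 5), s(4, 5), s(0, 6), s(1, 6), s(2, 6), s(3, 6)}

/-- The matching `{b3c1, b2c2}` of strange strips. -/
def strangeM : Set (Sym2 (Fin 7)) := {s(4, 5), s(3, 6)}

/-- `(G[V2], X2, Y2)` is a strange strip. -/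
def IsStrangeStripOn (G : SimpleGraph V) (V2 X2 Y2 : Finset V) : Prop :=
  ∃ f : V → Fin 7,
    IsThickeningBetween strangeH strangeM Set.univ G (↑V2 : Set V) f ∧
    (↑X2 : Set V) = {v | v ∈ V2 ∧ (f v = 0 ∨ f v = 1)} ∧
    (↑Y2 : Set V) = {v | v ∈ V2 ∧ (f v = 2 ∨ f v = 3 ∨ f v = 4)}

/-- The base graph of gear strips, on `v1, …, v10` (as `0, …, 9`). -/
def gearH : SimpleGraph (Fin 10) :=
  SimpleGraph.fromEdgeSet
    {s(0, 1), s(1, 2), s(2, 3), s(3, 4), s(4, 5), s(0, 5),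
     s(6, 0), s(6, 1), s(6, 2), s(6, 5),
     s(7, 2), s(7, 3), s(7, 4), s(7, 5), s(7, 6),
     s(8, 0), s(8, 2), s(8, 3), s(8, 5), s(8, 6), s(8, 7),
     s(9, 1), s(9, 2), s(9, 4), s(9, 5), s(9, 6), s(9, 7)}

/-- `(G[V2], X2, Y2)` is a gear strip. -/
def IsGearStripOn (G : SimpleGraph V) (V2 X2 Y2 : Finset V) : Prop :=
  ∃ (Xd : Finset (Fin 10)) (M : Set (Sym2 (Fin 10))) (f : V → Fin 10),
    Xd ⊆ {8, 9} ∧ M ⊆ {s((6 : Fin 10), 7)} ∧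
    IsThickeningBetween gearH M ((↑Xd : Set (Fin 10))ᶜ) G (↑V2 : Set V) f ∧
    (↑X2 : Set V) = {v | v ∈ V2 ∧ (f v = 0 ∨ f v = 1)} ∧
    (↑Y2 : Set V) = {v | v ∈ V2 ∧ (f v = 3 ∨ f v = 4)}

/-! ### The two exceptional three-cliqued classes -/

/-- The base graph of Exception I, on `v1, …, v8` (as `0, …, 7`);
`b` records whether `v2v5` is an edge. -/
def exIG (b : Bool) : SimpleGraph (Fin 8) :=
  SimpleGraph.fromEdgeSet
    ({s(0, 1), s(0, 2), s(0, 5), s(0, 6), s(1, 2), s(1, 3), s(2, 3), s(2, 4), s(3, 4),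
      s(3, 5), s(4, 5), s(5, 6), s(6, 7)} ∪ (if b then {s(1, 4)} else ∅))

/-- The matching of Exception I: `{v1v4, v3v6}`, plus `v2v5` when present. -/
def exIM (b : Bool) : Set (Sym2 (Fin 8)) :=
  {s(0, 3), s(2, 5)} ∪ (if b then {s(1, 4)} else ∅)

/-- The base graph of Exception II, on `v1, …, v9` (as `0, …, 8`); `b24` records
whether `v2v4` is an edge and `b75` whether `v7v5` is an edge. -/
def exIIG (b24 b75 : Bool) : SimpleGraph (Fin 9) :=
  SimpleGraph.fromEdgeSet
    ({s(0, 1), s(6, 7),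
      s(2, 3), s(2, 4), s(2, 5), s(2, 8), s(3, 4), s(3, 5), s(3, 8), s(4, 5), s(4, 8), s(5, 8),
      s(0, 2), s(0, 7), s(0, 8), s(5, 7), s(7, 8), s(1, 2), s(5, 6)}
      ∪ (if b24 then {s(1, 3)} else ∅) ∪ (if b75 then {s(4, 6)} else ∅))

/-! ### Circular interval representations -/

/-- Membership in the (closed) arc from `s` to `t` of the circle `[0,1)`,
going in increasing direction and possibly wrapping around. -/
def ArcMem (s t x : ℝ) : Prop := if s ≤ t then s ≤ x ∧ x ≤ t else (s ≤ x ∨ x ≤ t)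

set_option maxHeartbeats 1600000 in
theorem stmt9 {V : Type*} [Fintype V] [DecidableEq V] (G : SimpleGraph V) (hcf : ClawFree G)
    (A B C A1 A2 B1 B2 C1 C2 : Finset V)
    (hclA : G.IsClique (↑A : Set V)) (hclB : G.IsClique (↑B : Set V))
    (hclC : G.IsClique (↑C : Set V))
    (hdAB : Disjoint A B) (hdAC : Disjoint A C) (hdBC : Disjoint B C)
    (huniv : A ∪ B ∪ C = Finset.univ)
    (hA : A1 ∪ A2 = A) (hdA : Disjoint A1 A2)
    (hB : B1 ∪ B2 = B) (hdB : Disjoint B1 B2)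
    (hC : C1 ∪ C2 = C) (hdC : Disjoint C1 C2)
    (hhex : ∀ u ∈ A1 ∪ B1 ∪ C1, ∀ v ∈ A2 ∪ B2 ∪ C2,
      (G.Adj u v ↔ ((u ∈ A1 ∧ v ∈ A2) ∨ (u ∈ B1 ∧ v ∈ A2) ∨ (u ∈ B1 ∧ v ∈ B2) ∨
        (u ∈ C1 ∧ v ∈ B2) ∨ (u ∈ C1 ∧ v ∈ C2) ∨ (u ∈ A1 ∧ v ∈ C2))))
    (T : Finset V) (hT : GoodTriadOn G (↑(A1 ∪ B1 ∪ C1) : Set V) T) :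
    GoodTriad G T := by
  classical
  obtain ⟨hTS, ⟨hTcard, hTnonadj⟩, hgood⟩ := hT
  have hA1A : ∀ x, x ∈ A1 → x ∈ A := fun x hx => hA ▸ Finset.mem_union_left _ hx
  have hA2A : ∀ x, x ∈ A2 → x ∈ A := fun x hx => hA ▸ Finset.mem_union_right _ hx
  have hB1B : ∀ x, x ∈ B1 → x ∈ B := fun x hx => hB ▸ Finset.mem_union_left _ hx
  have hB2B : ∀ x, x ∈ B2 → x ∈ B := fun x hx => hB ▸ Finset.mem_union_right _ hx
  have hC1C : ∀ x, x ∈ C1 → x ∈ C := fun x hx => hC ▸ Finset.mem_union_left _ hx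
  have hC2C : ∀ x, x ∈ C2 → x ∈ C := fun x hx => hC ▸ Finset.mem_union_right _ hx
  have dAB := Finset.disjoint_left.mp hdAB
  have dAC := Finset.disjoint_left.mp hdAC
  have dBC := Finset.disjoint_left.mp hdBC
  have dA12 := Finset.disjoint_left.mp hdA
  have dB12 := Finset.disjoint_left.mp hdB
  have dC12 := Finset.disjoint_left.mp hdC
  have hadj_same : ∀ u w : V, u ≠ w →
      ((u ∈ A1 ∧ w ∈ A1) ∨ (u ∈ B1 ∧ w ∈ B1) ∨ (u ∈ C1 ∧ w ∈ C1)) → G.Adj u w := by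
    rintro u w hne (⟨h1, h2⟩ | ⟨h1, h2⟩ | ⟨h1, h2⟩)
    · exact hclA (Finset.mem_coe.mpr (hA1A _ h1)) (Finset.mem_coe.mpr (hA1A _ h2)) hne
    · exact hclB (Finset.mem_coe.mpr (hB1B _ h1)) (Finset.mem_coe.mpr (hB1B _ h2)) hne
    · exact hclC (Finset.mem_coe.mpr (hC1C _ h1)) (Finset.mem_coe.mpr (hC1C _ h2)) hne
  have hTmem : ∀ t ∈ T, t ∈ A1 ∨ t ∈ B1 ∨ t ∈ C1 := by
    intro t ht
    have := hTS (Finset.mem_coe.mpr ht)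
    simpa [Finset.mem_union, or_assoc] using this
  obtain ⟨x, y, z, hxy, hxz, hyz, hTxyz⟩ := Finset.card_eq_three.mp hTcard
  have hxT : x ∈ T := by rw [hTxyz]; simp
  have hyT : y ∈ T := by rw [hTxyz]; simp
  have hzT : z ∈ T := by rw [hTxyz]; simp
  have keyne : ∀ u ∈ T, ∀ w ∈ T, u ≠ w →
      ¬((u ∈ A1 ∧ w ∈ A1) ∨ (u ∈ B1 ∧ w ∈ B1) ∨ (u ∈ C1 ∧ w ∈ C1)) :=
    fun u hu w hw hne hm => hTnonadj u hu w hw hne (hadj_same u w hne hm)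
  have hx' := hTmem x hxT
  have hy' := hTmem y hyT
  have hz' := hTmem z hzT
  have kxy := keyne x hxT y hyT hxy
  have kxz := keyne x hxT z hzT hxz
  have kyz := keyne y hyT z hzT hyz
  have pick : ∀ P Q R : Finset V,
      (∀ u ∈ T, ∀ w ∈ T, u ≠ w →
        ¬((u ∈ P ∧ w ∈ P) ∨ (u ∈ Q ∧ w ∈ Q) ∨ (u ∈ R ∧ w ∈ R))) →
      (∀ t ∈ T, t ∈ P ∨ t ∈ Q ∨ t ∈ R) → ∃ t ∈ T, t ∈ P := by
    intro P Q R hk hmem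
    by_cases h1 : x ∈ P; · exact ⟨x, hxT, h1⟩
    by_cases h2 : y ∈ P; · exact ⟨y, hyT, h2⟩
    by_cases h3 : z ∈ P; · exact ⟨z, hzT, h3⟩
    exfalso
    have hx0 := ((hmem x hxT).resolve_left h1)
    have hy0 := ((hmem y hyT).resolve_left h2)
    have hz0 := ((hmem z hzT).resolve_left h3)
    rcases hx0 with hq1 | hq1 <;> rcases hy0 with hq2 | hq2 <;> rcases hz0 with hq3 | hq3
    · exact hk x hxT y hyT hxy (Or.inr (Or.inl ⟨hq1, hq2⟩))
    · exact hk x hxT y hyT hxy (Or.inr (Or.inl ⟨hq1, hq2⟩))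
    · exact hk x hxT z hzT hxz (Or.inr (Or.inl ⟨hq1, hq3⟩))
    · exact hk y hyT z hzT hyz (Or.inr (Or.inr ⟨hq2, hq3⟩))
    · exact hk y hyT z hzT hyz (Or.inr (Or.inl ⟨hq2, hq3⟩))
    · exact hk x hxT z hzT hxz (Or.inr (Or.inr ⟨hq1, hq3⟩))
    · exact hk x hxT y hyT hxy (Or.inr (Or.inr ⟨hq1, hq2⟩))
    · exact hk x hxT y hyT hxy (Or.inr (Or.inr ⟨hq1, hq2⟩))
  have hmeetA : ∃ t ∈ T, t ∈ A1 :=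
    pick A1 B1 C1 keyne hTmem
  have hmeetB : ∃ t ∈ T, t ∈ B1 :=
    pick B1 C1 A1
      (fun u hu w hw hne hm => keyne u hu w hw hne
        (hm.elim (fun h => Or.inr (Or.inl h))
          (fun h => h.elim (fun h => Or.inr (Or.inr h)) (fun h => Or.inl h))))
      (fun t ht => (hTmem t ht).elim (fun h => Or.inr (Or.inr h))
        (fun h => h.elim (fun h => Or.inl h) (fun h => Or.inr (Or.inl h))))
  have hmeetC : ∃ t ∈ T, t ∈ C1 :=
    pick C1 A1 B1
      (fun u hu w hw hne hm => keyne u hu w hw hne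
        (hm.elim (fun h => Or.inr (Or.inr h))
          (fun h => h.elim (fun h => Or.inl h) (fun h => Or.inr (Or.inl h)))))
      (fun t ht => (hTmem t ht).elim (fun h => Or.inr (Or.inl h))
        (fun h => h.elim (fun h => Or.inr (Or.inr h)) (fun h => Or.inl h)))
  obtain ⟨ta, htaT, htaA⟩ := hmeetA
  obtain ⟨tb, htbT, htbB⟩ := hmeetB
  obtain ⟨tc, htcT, htcC⟩ := hmeetC
  have hsplit : ∀ w : V, (w ∈ A1 ∪ B1 ∪ C1) ∨ (w ∈ A2 ∪ B2 ∪ C2) := by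
    intro w
    have hw : w ∈ A ∪ B ∪ C := huniv ▸ Finset.mem_univ w
    rw [← hA, ← hB, ← hC] at hw
    simp only [Finset.mem_union] at hw ⊢
    rcases hw with ((h | h) | (h | h)) | (h | h)
    · exact Or.inl (Or.inl (Or.inl h))
    · exact Or.inr (Or.inl (Or.inl h))
    · exact Or.inl (Or.inl (Or.inr h))
    · exact Or.inr (Or.inl (Or.inr h))
    · exact Or.inl (Or.inr h)
    · exact Or.inr (Or.inr h)
  have hnotboth : ∀ w : V, w ∈ A1 ∪ B1 ∪ C1 → w ∈ A2 ∪ B2 ∪ C2 → False := by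
    intro w h1 h2
    simp only [Finset.mem_union] at h1 h2
    rcases h1 with (h1 | h1) | h1 <;> rcases h2 with (h2 | h2) | h2
    · exact dA12 h1 h2
    · exact dAB (hA1A _ h1) (hB2B _ h2)
    · exact dAC (hA1A _ h1) (hC2C _ h2)
    · exact dAB (hA2A _ h2) (hB1B _ h1)
    · exact dB12 h1 h2
    · exact dBC (hB1B _ h1) (hC2C _ h2)
    · exact dAC (hA2A _ h2) (hC1C _ h1)
    · exact dBC (hB2B _ h2) (hC1C _ h1)
    · exact dC12 h1 h2
  have hS2adj : ∀ u₁ u₂ : V,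
      ((u₁ ∈ A1 ∧ u₂ ∈ A1) ∨ (u₁ ∈ B1 ∧ u₂ ∈ B1) ∨ (u₁ ∈ C1 ∧ u₂ ∈ C1)) →
      ∀ w, w ∈ A2 ∪ B2 ∪ C2 → (G.Adj u₁ w ↔ G.Adj u₂ w) := by
    intro u₁ u₂ hp w hw
    have hu₁ : u₁ ∈ A1 ∪ B1 ∪ C1 := by
      rcases hp with ⟨h, _⟩ | ⟨h, _⟩ | ⟨h, _⟩ <;> simp [Finset.mem_union, h]
    have hu₂ : u₂ ∈ A1 ∪ B1 ∪ C1 := by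
      rcases hp with ⟨_, h⟩ | ⟨_, h⟩ | ⟨_, h⟩ <;> simp [Finset.mem_union, h]
    rw [hhex u₁ hu₁ w hw, hhex u₂ hu₂ w hw]
    rcases hp with ⟨h1, h2⟩ | ⟨h1, h2⟩ | ⟨h1, h2⟩
    · have n1 : u₁ ∉ B1 := fun h => dAB (hA1A _ h1) (hB1B _ h)
      have n2 : u₁ ∉ C1 := fun h => dAC (hA1A _ h1) (hC1C _ h)
      have n3 : u₂ ∉ B1 := fun h => dAB (hA1A _ h2) (hB1B _ h)
      have n4 : u₂ ∉ C1 := fun h => dAC (hA1A _ h2) (hC1C _ h)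
      constructor
      · rintro (⟨hu, hw'⟩ | ⟨hu, hw'⟩ | ⟨hu, hw'⟩ | ⟨hu, hw'⟩ | ⟨hu, hw'⟩ | ⟨hu, hw'⟩)
        · exact Or.inl ⟨h2, hw'⟩
        · exact absurd hu n1
        · exact absurd hu n1
        · exact absurd hu n2
        · exact absurd hu n2
        · exact Or.inr (Or.inr (Or.inr (Or.inr (Or.inr ⟨h2, hw'⟩))))
      · rintro (⟨hu, hw'⟩ | ⟨hu, hw'⟩ | ⟨hu, hw'⟩ | ⟨hu, hw'⟩ | ⟨hu, hw'⟩ | ⟨hu, hw'⟩)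
        · exact Or.inl ⟨h1, hw'⟩
        · exact absurd hu n3
        · exact absurd hu n3
        · exact absurd hu n4
        · exact absurd hu n4
        · exact Or.inr (Or.inr (Or.inr (Or.inr (Or.inr ⟨h1, hw'⟩))))
    · have n1 : u₁ ∉ A1 := fun h => dAB (hA1A _ h) (hB1B _ h1)
      have n2 : u₁ ∉ C1 := fun h => dBC (hB1B _ h1) (hC1C _ h)
      have n3 : u₂ ∉ A1 := fun h => dAB (hA1A _ h) (hB1B _ h2)
      have n4 : u₂ ∉ C1 := fun h => dBC (hB1B _ h2) (hC1C _ h)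
      constructor
      · rintro (⟨hu, hw'⟩ | ⟨hu, hw'⟩ | ⟨hu, hw'⟩ | ⟨hu, hw'⟩ | ⟨hu, hw'⟩ | ⟨hu, hw'⟩)
        · exact absurd hu n1
        · exact Or.inr (Or.inl ⟨h2, hw'⟩)
        · exact Or.inr (Or.inr (Or.inl ⟨h2, hw'⟩))
        · exact absurd hu n2
        · exact absurd hu n2
        · exact absurd hu n1
      · rintro (⟨hu, hw'⟩ | ⟨hu, hw'⟩ | ⟨hu, hw'⟩ | ⟨hu, hw'⟩ | ⟨hu, hw'⟩ | ⟨hu, hw'⟩)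
        · exact absurd hu n3
        · exact Or.inr (Or.inl ⟨h1, hw'⟩)
        · exact Or.inr (Or.inr (Or.inl ⟨h1, hw'⟩))
        · exact absurd hu n4
        · exact absurd hu n4
        · exact absurd hu n3
    · have n1 : u₁ ∉ A1 := fun h => dAC (hA1A _ h) (hC1C _ h1)
      have n2 : u₁ ∉ B1 := fun h => dBC (hB1B _ h) (hC1C _ h1)
      have n3 : u₂ ∉ A1 := fun h => dAC (hA1A _ h) (hC1C _ h2)
      have n4 : u₂ ∉ B1 := fun h => dBC (hB1B _ h) (hC1C _ h2)
      constructor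
      · rintro (⟨hu, hw'⟩ | ⟨hu, hw'⟩ | ⟨hu, hw'⟩ | ⟨hu, hw'⟩ | ⟨hu, hw'⟩ | ⟨hu, hw'⟩)
        · exact absurd hu n1
        · exact absurd hu n2
        · exact absurd hu n2
        · exact Or.inr (Or.inr (Or.inr (Or.inl ⟨h2, hw'⟩)))
        · exact Or.inr (Or.inr (Or.inr (Or.inr (Or.inl ⟨h2, hw'⟩))))
        · exact absurd hu n1
      · rintro (⟨hu, hw'⟩ | ⟨hu, hw'⟩ | ⟨hu, hw'⟩ | ⟨hu, hw'⟩ | ⟨hu, hw'⟩ | ⟨hu, hw'⟩)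
        · exact absurd hu n3
        · exact absurd hu n4
        · exact absurd hu n4
        · exact Or.inr (Or.inr (Or.inr (Or.inl ⟨h1, hw'⟩)))
        · exact Or.inr (Or.inr (Or.inr (Or.inr (Or.inl ⟨h1, hw'⟩))))
        · exact absurd hu n3
  refine ⟨Set.subset_univ _, ⟨hTcard, hTnonadj⟩, ?_⟩
  intro v _ hvT
  rcases hsplit v with hv1 | hv2
  · -- v in G1
    have memS : v ∈ (↑(A1 ∪ B1 ∪ C1) : Set V) := Finset.mem_coe.mpr hv1
    have hsame : ∀ t ∈ T,
        closedNbhdOn G (↑(A1 ∪ B1 ∪ C1)) v ⊆ closedNbhdOn G (↑(A1 ∪ B1 ∪ C1)) t →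
        ((v ∈ A1 ∧ t ∈ A1) ∨ (v ∈ B1 ∧ t ∈ B1) ∨ (v ∈ C1 ∧ t ∈ C1)) := by
      intro t ht hsub
      have hother : ∀ t' ∈ T, t' ≠ t → v ≠ t' ∧ ¬G.Adj v t' := by
        intro t' ht' hne
        have ht'S1 : t' ∈ A1 ∪ B1 ∪ C1 := Finset.mem_coe.mp (hTS (Finset.mem_coe.mpr ht'))
        have hnot : t' ∉ closedNbhdOn G (↑(A1 ∪ B1 ∪ C1)) t := by
          intro hmem
          rcases Set.mem_insert_iff.mp hmem.2 with h | h
          · exact hne h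
          · exact hTnonadj t ht t' ht' (Ne.symm hne) h
        have hnv : t' ∉ closedNbhdOn G (↑(A1 ∪ B1 ∪ C1)) v := fun hmem => hnot (hsub hmem)
        constructor
        · intro h
          exact hnv ⟨Finset.mem_coe.mpr ht'S1, by rw [← h]; exact Set.mem_insert _ _⟩
        · intro hadj
          exact hnv ⟨Finset.mem_coe.mpr ht'S1, Set.mem_insert_iff.mpr (Or.inr hadj)⟩
      have hvS1 : v ∈ A1 ∨ v ∈ B1 ∨ v ∈ C1 := by
        simpa [Finset.mem_union, or_assoc] using hv1
      rcases hvS1 with hv | hv | hv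
      · left; refine ⟨hv, ?_⟩
        by_contra htA
        have hne : ta ≠ t := fun h => htA (h ▸ htaA)
        obtain ⟨hne', hnadj⟩ := hother ta htaT hne
        exact hnadj (hadj_same v ta hne' (Or.inl ⟨hv, htaA⟩))
      · right; left; refine ⟨hv, ?_⟩
        by_contra htB
        have hne : tb ≠ t := fun h => htB (h ▸ htbB)
        obtain ⟨hne', hnadj⟩ := hother tb htbT hne
        exact hnadj (hadj_same v tb hne' (Or.inr (Or.inl ⟨hv, htbB⟩)))
      · right; right; refine ⟨hv, ?_⟩
        by_contra htC
        have hne : tc ≠ t := fun h => htC (h ▸ htcC)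
        obtain ⟨hne', hnadj⟩ := hother tc htcT hne
        exact hnadj (hadj_same v tc hne' (Or.inr (Or.inr ⟨hv, htcC⟩)))
    have hlift : ∀ t ∈ T,
        ((v ∈ A1 ∧ t ∈ A1) ∨ (v ∈ B1 ∧ t ∈ B1) ∨ (v ∈ C1 ∧ t ∈ C1)) →
        ∀ w : V, w ∈ A2 ∪ B2 ∪ C2 →
          (w ∈ closedNbhdOn G Set.univ v ↔ w ∈ closedNbhdOn G Set.univ t) := by
      intro t ht hp w hw
      have htS1 : t ∈ A1 ∪ B1 ∪ C1 := Finset.mem_coe.mp (hTS (Finset.mem_coe.mpr ht))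
      have hwv : w ≠ v := fun h => hnotboth v hv1 (h ▸ hw)
      have hwt : w ≠ t := fun h => hnotboth t htS1 (h ▸ hw)
      have hadjiff := hS2adj v t hp w hw
      simp only [closedNbhdOn, closedNbhd, Set.mem_inter_iff, Set.mem_univ, true_and,
        Set.mem_insert_iff, SimpleGraph.mem_neighborSet]
      constructor
      · rintro (h | h)
        · exact absurd h hwv
        · exact Or.inr (hadjiff.mp h)
      · rintro (h | h)
        · exact absurd h hwt
        · exact Or.inr (hadjiff.mpr h)
    have hS1iff : ∀ u w : V, w ∈ A1 ∪ B1 ∪ C1 →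
        (w ∈ closedNbhdOn G Set.univ u ↔ w ∈ closedNbhdOn G (↑(A1 ∪ B1 ∪ C1)) u) := by
      intro u w hw
      have hwS : w ∈ (↑(A1 ∪ B1 ∪ C1) : Set V) := Finset.mem_coe.mpr hw
      simp only [closedNbhdOn, Set.mem_inter_iff, Set.mem_univ, true_and, hwS]
    rcases hgood v memS hvT with h2nb | ⟨t, ht, heq⟩ | ⟨t, ht, hss⟩
    · exact Or.inl h2nb
    · refine Or.inr (Or.inl ⟨t, ht, ?_⟩)
      have hp := hsame t ht heq.subset
      ext w
      rcases hsplit w with hw1 | hw2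
      · rw [hS1iff v w hw1, hS1iff t w hw1, heq]
      · exact hlift t ht hp w hw2
    · refine Or.inr (Or.inr ⟨t, ht, ?_⟩)
      have hp := hsame t ht hss.subset
      obtain ⟨xx, hxt, hxv⟩ := Set.exists_of_ssubset hss
      refine Set.ssubset_iff_subset_ne.mpr ⟨?_, ?_⟩
      · intro w hw
        rcases hsplit w with hw1 | hw2
        · exact (hS1iff t w hw1).mpr (hss.subset ((hS1iff v w hw1).mp hw))
        · exact (hlift t ht hp w hw2).mp hw
      · intro he
        apply hxv
        have hx_univ_t : xx ∈ closedNbhdOn G Set.univ t := ⟨trivial, hxt.2⟩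
        rw [← he] at hx_univ_t
        exact ⟨hxt.1, hx_univ_t.2⟩
  · -- v in G2
    left
    simp only [Finset.mem_union] at hv2
    have hta1 : ta ∈ A1 ∪ B1 ∪ C1 := by simp [Finset.mem_union, htaA]
    have htb1 : tb ∈ A1 ∪ B1 ∪ C1 := by simp [Finset.mem_union, htbB]
    have htc1 : tc ∈ A1 ∪ B1 ∪ C1 := by simp [Finset.mem_union, htcC]
    have hv2' : v ∈ A2 ∪ B2 ∪ C2 := by simp only [Finset.mem_union]; exact hv2
    rcases hv2 with (hv2 | hv2) | hv2
    · refine ⟨ta, htaT, tb, htbT, ?_, ?_, ?_⟩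
      · exact fun h => dAB (hA1A _ htaA) (hB1B _ (h ▸ htbB))
      · exact ((hhex ta hta1 v hv2').mpr (Or.inl ⟨htaA, hv2⟩)).symm
      · exact ((hhex tb htb1 v hv2').mpr (Or.inr (Or.inl ⟨htbB, hv2⟩))).symm
    · refine ⟨tb, htbT, tc, htcT, ?_, ?_, ?_⟩
      · exact fun h => dBC (hB1B _ htbB) (hC1C _ (h ▸ htcC))
      · exact ((hhex tb htb1 v hv2').mpr (Or.inr (Or.inr (Or.inl ⟨htbB, hv2⟩)))).symm
      · exact ((hhex tc htc1 v hv2').mpr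
          (Or.inr (Or.inr (Or.inr (Or.inl ⟨htcC, hv2⟩))))).symm
    · refine ⟨tc, htcT, ta, htaT, ?_, ?_, ?_⟩
      · exact fun h => dAC (hA1A _ htaA) (hC1C _ (h ▸ htcC))
      · exact ((hhex tc htc1 v hv2').mpr
          (Or.inr (Or.inr (Or.inr (Or.inr (Or.inl ⟨htcC, hv2⟩)))))).symm
      · exact ((hhex ta hta1 v hv2').mpr
          (Or.inr (Or.inr (Or.inr (Or.inr (Or.inr ⟨htaA, hv2⟩)))))).symm

end Paper
end

section
/- Let (X,Y) be a nonskeletal, non-straddling homogeneous pair of cliques in a three-cliqued graph (G1,A1,B1,C1), and suppose a three-cliqued graph (G,A,B,C) admits a hex-join into (G1,A1,B1,C1) and some three-cliqued graph (G2,A2,B2,C2). Then (X,Y) is a nonskeletal homogeneous pair of cliques in G; in particular, G is not skeletal. -/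
open SimpleGraph

namespace Paper

variable {V : Type*} {W : Type*}

lemma subset_of_not_straddles' {V : Type*} {A B C : Set V} {X : Finset V}
    (hX : (↑X : Set V) ⊆ A ∪ B ∪ C) (hne : X.Nonempty)
    (h : ¬Straddles A B C X) :
    (↑X : Set V) ⊆ A ∨ (↑X : Set V) ⊆ B ∨ (↑X : Set V) ⊆ C := by
  obtain ⟨x, hx⟩ := hne
  have hx' := hX (Finset.mem_coe.mpr hx)
  rcases hx' with (hxa | hxb) | hxc
  · refine Or.inl fun y hy => ?_
    rcases hX hy with (hya | hyb) | hyc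
    · exact hya
    · exact absurd (Or.inl ⟨⟨x, hx, hxa⟩, ⟨y, hy, hyb⟩⟩) h
    · exact absurd (Or.inr (Or.inl ⟨⟨x, hx, hxa⟩, ⟨y, hy, hyc⟩⟩)) h
  · refine Or.inr (Or.inl fun y hy => ?_)
    rcases hX hy with (hya | hyb) | hyc
    · exact absurd (Or.inl ⟨⟨y, hy, hya⟩, ⟨x, hx, hxb⟩⟩) h
    · exact hyb
    · exact absurd (Or.inr (Or.inr ⟨⟨x, hx, hxb⟩, ⟨y, hy, hyc⟩⟩)) h
  · refine Or.inr (Or.inr fun y hy => ?_)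
    rcases hX hy with (hya | hyb) | hyc
    · exact absurd (Or.inr (Or.inl ⟨⟨y, hy, hya⟩, ⟨x, hx, hxc⟩⟩)) h
    · exact absurd (Or.inr (Or.inr ⟨⟨y, hy, hyb⟩, ⟨x, hx, hxc⟩⟩)) h
    · exact hyc

lemma uniform_adj {V : Type*} {G : SimpleGraph V} {X : Finset V} {v : V} (Q : Prop)
    (h : ∀ a ∈ X, (G.Adj a v ↔ Q)) :
    (∀ a ∈ X, G.Adj v a) ∨ (∀ a ∈ X, ¬G.Adj v a) := by
  by_cases hQ : Q
  · exact Or.inl fun a ha => ((h a ha).mpr hQ).symm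
  · exact Or.inr fun a ha had => hQ ((h a ha).mp had.symm)

set_option maxHeartbeats 1000000 in
theorem stmt10 {V : Type*} [Fintype V] [DecidableEq V] (G : SimpleGraph V)
    (A B C A1 A2 B1 B2 C1 C2 : Finset V)
    (hclA : G.IsClique (↑A : Set V)) (hclB : G.IsClique (↑B : Set V))
    (hclC : G.IsClique (↑C : Set V))
    (hdAB : Disjoint A B) (hdAC : Disjoint A C) (hdBC : Disjoint B C)
    (huniv : A ∪ B ∪ C = Finset.univ)
    (hA : A1 ∪ A2 = A) (hdA : Disjoint A1 A2)
    (hB : B1 ∪ B2 = B) (hdB : Disjoint B1 B2)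
    (hC : C1 ∪ C2 = C) (hdC : Disjoint C1 C2)
    (hhex : ∀ u ∈ A1 ∪ B1 ∪ C1, ∀ v ∈ A2 ∪ B2 ∪ C2,
      (G.Adj u v ↔ ((u ∈ A1 ∧ v ∈ A2) ∨ (u ∈ B1 ∧ v ∈ A2) ∨ (u ∈ B1 ∧ v ∈ B2) ∨
        (u ∈ C1 ∧ v ∈ B2) ∨ (u ∈ C1 ∧ v ∈ C2) ∨ (u ∈ A1 ∧ v ∈ C2))))
    (X Y : Finset V)
    (hXY : IsHomPairOn G (↑(A1 ∪ B1 ∪ C1) : Set V) X Y)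
    (hns : ¬IsSkeletalPair G X Y)
    (hnstrX : ¬Straddles (↑A1) (↑B1) (↑C1) X) (hnstrY : ¬Straddles (↑A1) (↑B1) (↑C1) Y) :
    IsHomPair G X Y ∧ ¬IsSkeletalPair G X Y ∧ ¬Skeletal G := by
  obtain ⟨hXS, hYS, hclX, hclY, hXne, hYne, hdXY, hcard, hhom⟩ := hXY
  have hScoe : (↑(A1 ∪ B1 ∪ C1) : Set V) = ↑A1 ∪ ↑B1 ∪ ↑C1 := by
    simp [Finset.coe_union, Set.union_assoc]
  have hA1A : A1 ⊆ A := hA ▸ Finset.subset_union_left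
  have hB1B : B1 ⊆ B := hB ▸ Finset.subset_union_left
  have hC1C : C1 ⊆ C := hC ▸ Finset.subset_union_left
  have hdA1B1 : Disjoint A1 B1 := hdAB.mono hA1A hB1B
  have hdA1C1 : Disjoint A1 C1 := hdAC.mono hA1A hC1C
  have hdB1C1 : Disjoint B1 C1 := hdBC.mono hB1B hC1C
  rw [hScoe] at hXS hYS hhom
  have hXsub := subset_of_not_straddles' hXS hXne hnstrX
  have hYsub := subset_of_not_straddles' hYS hYne hnstrY
  have hpair : IsHomPair G X Y := by
    refine ⟨Set.subset_univ _, Set.subset_univ _, hclX, hclY, hXne, hYne, hdXY, hcard, ?_⟩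
    intro v _ hvX hvY
    by_cases hv1 : v ∈ A1 ∪ B1 ∪ C1
    · refine hhom v ?_ hvX hvY
      simp only [Finset.mem_union] at hv1
      simp only [Set.mem_union, Finset.mem_coe]
      exact hv1
    · have hv2 : v ∈ A2 ∪ B2 ∪ C2 := by
        have hu := Finset.mem_univ v
        rw [← huniv, ← hA, ← hB, ← hC] at hu
        simp only [Finset.mem_union] at hu hv1 ⊢
        push_neg at hv1
        obtain ⟨⟨h1, h2⟩, h3⟩ := hv1
        rcases hu with ((h | h) | (h | h)) | (h | h)
        exacts [absurd h h1, Or.inl (Or.inl h), absurd h h2, Or.inl (Or.inr h),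
          absurd h h3, Or.inr h]
      have key : ∀ Z : Finset V, (↑Z : Set V) ⊆ ↑A1 ∨ (↑Z : Set V) ⊆ ↑B1 ∨
          (↑Z : Set V) ⊆ ↑C1 → (∀ a ∈ Z, G.Adj v a) ∨ (∀ a ∈ Z, ¬G.Adj v a) := by
        intro Z hZ
        rcases hZ with hZ | hZ | hZ
        · refine uniform_adj (v ∈ A2 ∨ v ∈ C2) fun a ha => ?_
          have haA1 : a ∈ A1 := hZ ha
          have haB1 : a ∉ B1 := Finset.disjoint_left.mp hdA1B1 haA1
          have haC1 : a ∉ C1 := Finset.disjoint_left.mp hdA1C1 haA1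
          rw [hhex a (by simp [haA1]) v hv2]
          constructor
          · rintro (⟨_, h⟩ | ⟨h', _⟩ | ⟨h', _⟩ | ⟨h', _⟩ | ⟨h', _⟩ | ⟨_, h⟩)
            exacts [Or.inl h, absurd h' haB1, absurd h' haB1, absurd h' haC1,
              absurd h' haC1, Or.inr h]
          · rintro (h | h)
            · exact Or.inl ⟨haA1, h⟩
            · exact Or.inr (Or.inr (Or.inr (Or.inr (Or.inr ⟨haA1, h⟩))))
        · refine uniform_adj (v ∈ A2 ∨ v ∈ B2) fun a ha => ?_
          have haB1 : a ∈ B1 := hZ ha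
          have haA1 : a ∉ A1 := Finset.disjoint_right.mp hdA1B1 haB1
          have haC1 : a ∉ C1 := Finset.disjoint_left.mp hdB1C1 haB1
          rw [hhex a (by simp [haB1]) v hv2]
          constructor
          · rintro (⟨h', _⟩ | ⟨_, h⟩ | ⟨_, h⟩ | ⟨h', _⟩ | ⟨h', _⟩ | ⟨h', _⟩)
            exacts [absurd h' haA1, Or.inl h, Or.inr h, absurd h' haC1,
              absurd h' haC1, absurd h' haA1]
          · rintro (h | h)
            · exact Or.inr (Or.inl ⟨haB1, h⟩)
            · exact Or.inr (Or.inr (Or.inl ⟨haB1, h⟩))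
        · refine uniform_adj (v ∈ B2 ∨ v ∈ C2) fun a ha => ?_
          have haC1 : a ∈ C1 := hZ ha
          have haA1 : a ∉ A1 := Finset.disjoint_right.mp hdA1C1 haC1
          have haB1 : a ∉ B1 := Finset.disjoint_right.mp hdB1C1 haC1
          rw [hhex a (by simp [haC1]) v hv2]
          constructor
          · rintro (⟨h', _⟩ | ⟨h', _⟩ | ⟨h', _⟩ | ⟨_, h⟩ | ⟨_, h⟩ | ⟨h', _⟩)
            exacts [absurd h' haA1, absurd h' haB1, absurd h' haB1, Or.inl h,
              Or.inr h, absurd h' haA1]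
          · rintro (h | h)
            · exact Or.inr (Or.inr (Or.inr (Or.inl ⟨haC1, h⟩)))
            · exact Or.inr (Or.inr (Or.inr (Or.inr (Or.inl ⟨haC1, h⟩))))
      exact ⟨key X hXsub, key Y hYsub⟩
  exact ⟨hpair, hns, fun hsk => hns (hsk X Y hpair)⟩

end Paper
end

section
/- Let G be a graph on v1,…,v8 whose edges are exactly v1v2, v1v3, v1v6, v1v7, v2v3, v2v4, v3v4, v3v5, v4v5, v4v6, v5v6, v6v7, v7v8, together possibly with v2v5. Let M be the matching consisting of v1v4 and v3v6, and also v2v5 if v2v5 ∈ E(G). Let X ⊆ {v3,v4} and let G' be a thickening of (G ∪ M) − X under M (pairs of M meeting X being discarded). Suppose the three-cliqued graph (G', I({v1,v2,v3} ∖ X), I({v4,v5,v6} ∖ X), I({v7,v8})) is weakly skeletal. Then G' contains a good triad. -/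
open SimpleGraph

namespace Paper

variable {V : Type*} {W : Type*}

/-! ### Auxiliary lemmas for stmt13 -/

section Stmt13Aux
variable {V : Type*} {W : Type*}

private lemma mem_cn (G : SimpleGraph V) (v u : V) :
    u ∈ closedNbhdOn G Set.univ v ↔ (u = v ∨ G.Adj v u) := by
  simp [closedNbhdOn, closedNbhd]

private lemma exists_max_clique_on [Fintype V] (G : SimpleGraph V) (S : Set V) :
    ∃ s : Finset V, ↑s ⊆ S ∧ G.IsNClique (cliqueNumOn G S) s := by
  classical
  have h0 : (0:ℕ) ∈ {n | ∃ s : Finset V, ↑s ⊆ S ∧ G.IsNClique n s} :=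
    ⟨∅, by simp, by constructor <;> simp⟩
  have hbdd : BddAbove {n | ∃ s : Finset V, ↑s ⊆ S ∧ G.IsNClique n s} := by
    refine ⟨Fintype.card V, fun n hn => ?_⟩
    obtain ⟨s, _, hs⟩ := hn
    rw [← hs.2]
    simpa using Finset.card_le_univ s
  exact Nat.sSup_mem ⟨0, h0⟩ hbdd

private lemma skeletal_cb [Fintype V] {G : SimpleGraph V} {A B : Finset V}
    (hd : Disjoint A B) (hsk : IsSkeletalPair G A B) {a a' b b' : V}
    (ha : a ∈ A) (ha' : a' ∈ A) (hb : b ∈ B) (hb' : b' ∈ B)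
    (e1 : G.Adj a b') (e2 : G.Adj a' b) : G.Adj a b := by
  classical
  obtain ⟨s, hsub, hcl⟩ := exists_max_clique_on G (↑A ∪ ↑B)
  have key : ∀ x ∈ A, ∀ y ∈ B, G.Adj x y → x ∈ s ∧ y ∈ s := by
    intro x hx y hy hxy
    by_contra hcon
    have hclD : (G.deleteEdges {s(x,y)}).IsNClique (cliqueNumOn G (↑A ∪ ↑B)) s := by
      refine ⟨?_, hcl.2⟩
      intro u hu w hw hne
      rw [SimpleGraph.deleteEdges_adj]
      refine ⟨hcl.1 hu hw hne, ?_⟩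
      simp only [Set.mem_singleton_iff]
      intro he
      rcases Sym2.eq_iff.mp he with ⟨h1, h2⟩ | ⟨h1, h2⟩
      · exact hcon ⟨by rw [← h1]; exact_mod_cast hu, by rw [← h2]; exact_mod_cast hw⟩
      · exact hcon ⟨by rw [← h2]; exact_mod_cast hw, by rw [← h1]; exact_mod_cast hu⟩
    have hle : cliqueNumOn G (↑A ∪ ↑B) ≤ cliqueNumOn (G.deleteEdges {s(x,y)}) (↑A ∪ ↑B) := by
      apply le_csSup
      · refine ⟨Fintype.card V, fun n hn => ?_⟩
        obtain ⟨s', _, hs'⟩ := hn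
        rw [← hs'.2]
        simpa using Finset.card_le_univ s'
      · exact ⟨s, hsub, hclD⟩
    exact absurd (hsk x hx y hy hxy) (not_lt.mpr hle)
  have has : a ∈ s := (key a ha b' hb' e1).1
  have hbs : b ∈ s := (key a' ha' b hb e2).2
  have hab : a ≠ b := fun h => (Finset.disjoint_left.mp hd ha) (h ▸ hb)
  exact hcl.1 (by exact_mod_cast has) (by exact_mod_cast hbs) hab

private lemma mkTriad [DecidableEq V] {G : SimpleGraph V} {a b c : V}
    (hab : a ≠ b) (hac : a ≠ c) (hbc : b ≠ c)
    (n1 : ¬G.Adj a b) (n2 : ¬G.Adj a c) (n3 : ¬G.Adj b c) :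
    IsTriad G {a, b, c} := by
  refine ⟨?_, ?_⟩
  · rw [Finset.card_insert_of_notMem (by simp [hab, hac]),
      Finset.card_insert_of_notMem (by simp [hbc]), Finset.card_singleton]
  · intro u hu w hw hne
    simp only [Finset.mem_insert, Finset.mem_singleton] at hu hw
    rcases hu with rfl | rfl | rfl <;> rcases hw with rfl | rfl | rfl <;>
      first
        | exact absurd rfl hne
        | assumption
        | exact fun h => n1 h.symm
        | exact fun h => n2 h.symm
        | exact fun h => n3 h.symm

private lemma twin_gen {H : SimpleGraph W} {M : Set (Sym2 W)} {R : Set W}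
    {G : SimpleGraph V} {f : V → W}
    (ht : IsThickeningBetween H M R G Set.univ f) {x : W}
    (hMx : ∀ w ∈ R, w ≠ x → s(w, x) ∉ M)
    {v t : V} (hv : f v = x) (htx : f t = x) :
    closedNbhdOn G Set.univ v = closedNbhdOn G Set.univ t := by
  classical
  have mono : ∀ v t u : V, f v = x → f t = x → (u = v ∨ G.Adj v u) → (u = t ∨ G.Adj t u) := by
    intro v t u hv htx h
    by_cases hut : u = t
    · exact Or.inl hut
    by_cases hfu : f u = x
    · exact Or.inr (ht.fibers_clique x ⟨trivial, htx⟩ ⟨trivial, hfu⟩ (Ne.symm hut))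
    · have hne : u ≠ v := fun h0 => hfu (h0 ▸ hv)
      have hadj : G.Adj v u := h.resolve_left hne
      have hfvu : f v ≠ f u := by rw [hv]; exact fun h0 => hfu h0.symm
      have hHa : H.Adj (f v) (f u) := by
        by_contra hH
        exact ht.nonadj_of_nonadj v trivial u trivial hfvu hH hadj
      have hM2 : s(f t, f u) ∉ M := by
        rw [htx, Sym2.eq_swap]
        exact hMx (f u) (ht.maps_into u trivial) hfu
      refine Or.inr (ht.adj_of_adj t trivial u trivial ?_ ?_ hM2)
      · rw [htx, ← hv]; exact hfvu
      · rw [htx, ← hv]; exact hHa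
  ext u
  rw [mem_cn, mem_cn]
  exact ⟨mono v t u hv htx, mono t v u htx hv⟩

private lemma twinM {H : SimpleGraph W} {M : Set (Sym2 W)} {R : Set W}
    {G : SimpleGraph V} {f : V → W}
    (ht : IsThickeningBetween H M R G Set.univ f) {x y : W} (hxy : x ≠ y)
    (hMx : ∀ w ∈ R, w ≠ x → w ≠ y → s(w, x) ∉ M)
    (hcb : ∀ t u : V, f t = x → f u = y → (∃ w, f w = y ∧ G.Adj t w) →
      (∃ w, f w = x ∧ G.Adj w u) → G.Adj t u) :
    (∀ v t : V, f v = x → f t = x →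
      ((∃ w, f w = y ∧ G.Adj v w) ↔ (∃ w, f w = y ∧ G.Adj t w)) →
      closedNbhdOn G Set.univ v = closedNbhdOn G Set.univ t) ∧
    (∀ v t : V, f v = x → f t = x → ¬(∃ w, f w = y ∧ G.Adj v w) →
      (∃ w, f w = y ∧ G.Adj t w) →
      closedNbhdOn G Set.univ v ⊂ closedNbhdOn G Set.univ t) := by
  classical
  have mono : ∀ v t u : V, f v = x → f t = x →
      ((∃ w, f w = y ∧ G.Adj v w) → (∃ w, f w = y ∧ G.Adj t w)) →
      (u = v ∨ G.Adj v u) → (u = t ∨ G.Adj t u) := by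
    intro v t u hv htx himp h
    by_cases hut : u = t
    · exact Or.inl hut
    by_cases hfu : f u = x
    · exact Or.inr (ht.fibers_clique x ⟨trivial, htx⟩ ⟨trivial, hfu⟩ (Ne.symm hut))
    have hne : u ≠ v := fun h0 => hfu (h0 ▸ hv)
    have hadj : G.Adj v u := h.resolve_left hne
    by_cases hfy : f u = y
    · exact Or.inr (hcb t u htx hfy (himp ⟨u, hfy, hadj⟩) ⟨v, hv, hadj⟩)
    · have hfvu : f v ≠ f u := by rw [hv]; exact fun h0 => hfu h0.symm
      have hHa : H.Adj (f v) (f u) := by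
        by_contra hH
        exact ht.nonadj_of_nonadj v trivial u trivial hfvu hH hadj
      have hM2 : s(f t, f u) ∉ M := by
        rw [htx, Sym2.eq_swap]
        exact hMx (f u) (ht.maps_into u trivial) hfu hfy
      refine Or.inr (ht.adj_of_adj t trivial u trivial ?_ ?_ hM2)
      · rw [htx, ← hv]; exact hfvu
      · rw [htx, ← hv]; exact hHa
  constructor
  · intro v t hv htx hiff
    ext u
    rw [mem_cn, mem_cn]
    exact ⟨mono v t u hv htx hiff.mp, mono t v u htx hv hiff.mpr⟩
  · intro v t hv htx hno hyes
    rw [Set.ssubset_def]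
    constructor
    · intro u hu
      rw [mem_cn] at hu ⊢
      exact mono v t u hv htx (fun h => absurd h hno) hu
    · intro hsub
      obtain ⟨w, hwy, htw⟩ := hyes
      have hwin : w ∈ closedNbhdOn G Set.univ t := (mem_cn G t w).mpr (Or.inr htw)
      have hwv := hsub hwin
      rw [mem_cn] at hwv
      rcases hwv with h0 | hvw
      · exact hxy ((hv.symm.trans (h0 ▸ hwy)).symm ▸ rfl)
      · exact hno ⟨w, hwy, hvw⟩

private lemma pairCB [Fintype V] [DecidableEq V] [DecidableEq W]
    {H : SimpleGraph W} {M : Set (Sym2 W)} {R : Set W}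
    {G : SimpleGraph V} {f : V → W}
    (ht : IsThickeningBetween H M R G Set.univ f) {x y : W}
    (hx : x ∈ R) (hy : y ∈ R) (hxy : x ≠ y) (hm : s(x, y) ∈ M)
    (hMx : ∀ w ∈ R, w ≠ x → w ≠ y → s(w, x) ∉ M)
    (hMy : ∀ w ∈ R, w ≠ x → w ≠ y → s(w, y) ∉ M)
    {A B C : Set V} (hws : WeaklySkeletal G A B C)
    (hsx : ¬ Straddles A B C (Finset.univ.filter (fun v => f v = x)))
    (hsy : ¬ Straddles A B C (Finset.univ.filter (fun v => f v = y))) :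
    ∀ u w u' w' : V, f u = x → f w = y → f u' = x → f w' = y →
      G.Adj u w → G.Adj u' w' → G.Adj u w' := by
  classical
  set Ix := Finset.univ.filter (fun v => f v = x) with hIxdef
  set Iy := Finset.univ.filter (fun v => f v = y) with hIydef
  have hmemx : ∀ v : V, v ∈ Ix ↔ f v = x := fun v => by simp [hIxdef]
  have hmemy : ∀ v : V, v ∈ Iy ↔ f v = y := fun v => by simp [hIydef]
  have hclx : G.IsClique (↑Ix : Set V) := by
    have he : (↑Ix : Set V) = {v | v ∈ Set.univ ∧ f v = x} := by ext v; simp [hIxdef]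
    rw [he]; exact ht.fibers_clique x
  have hcly : G.IsClique (↑Iy : Set V) := by
    have he : (↑Iy : Set V) = {v | v ∈ Set.univ ∧ f v = y} := by ext v; simp [hIydef]
    rw [he]; exact ht.fibers_clique y
  have hdisj : Disjoint Ix Iy := by
    rw [Finset.disjoint_left]
    intro v hvx hvy
    exact hxy (((hmemx v).mp hvx).symm.trans ((hmemy v).mp hvy))
  obtain ⟨u0, -, w0, -, hu0, hw0, hadj0⟩ := ht.semi_adj x hx y hy hm
  obtain ⟨u1, -, w1, -, hu1, hw1, hnadj1⟩ := ht.semi_nonadj x hx y hy hm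
  have hcard : 3 ≤ Ix.card + Iy.card := by
    have h1 : 1 ≤ Ix.card := Finset.card_pos.mpr ⟨u0, (hmemx u0).mpr hu0⟩
    have h2 : 1 ≤ Iy.card := Finset.card_pos.mpr ⟨w0, (hmemy w0).mpr hw0⟩
    by_cases he : u0 = u1
    · have hww : w0 ≠ w1 := by
        intro h
        exact hnadj1 (by rw [← he, ← h]; exact hadj0)
      have : 2 ≤ Iy.card := Finset.one_lt_card.mpr
        ⟨w0, (hmemy w0).mpr hw0, w1, (hmemy w1).mpr hw1, hww⟩
      omega
    · have : 2 ≤ Ix.card := Finset.one_lt_card.mpr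
        ⟨u0, (hmemx u0).mpr hu0, u1, (hmemx u1).mpr hu1, he⟩
      omega
  have hp : IsHomPair G Ix Iy := by
    refine ⟨Set.subset_univ _, Set.subset_univ _, hclx, hcly,
      ⟨u0, (hmemx u0).mpr hu0⟩, ⟨w0, (hmemy w0).mpr hw0⟩, hdisj, hcard, ?_⟩
    intro v _ hvx hvy
    have hfvx : f v ≠ x := fun h => hvx ((hmemx v).mpr h)
    have hfvy : f v ≠ y := fun h => hvy ((hmemy v).mpr h)
    have hfvR : f v ∈ R := ht.maps_into v trivial
    constructor
    · by_cases hH : H.Adj (f v) x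
      · left
        intro a ha
        have hfa := (hmemx a).mp ha
        refine ht.adj_of_adj v trivial a trivial ?_ ?_ ?_
        · rw [hfa]; exact hfvx
        · rw [hfa]; exact hH
        · rw [hfa]; exact hMx (f v) hfvR hfvx hfvy
      · right
        intro a ha
        have hfa := (hmemx a).mp ha
        refine ht.nonadj_of_nonadj v trivial a trivial ?_ ?_
        · rw [hfa]; exact hfvx
        · rw [hfa]; exact hH
    · by_cases hH : H.Adj (f v) y
      · left
        intro a ha
        have hfa := (hmemy a).mp ha
        refine ht.adj_of_adj v trivial a trivial ?_ ?_ ?_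
        · rw [hfa]; exact hfvy
        · rw [hfa]; exact hH
        · rw [hfa]; exact hMy (f v) hfvR hfvx hfvy
      · right
        intro a ha
        have hfa := (hmemy a).mp ha
        refine ht.nonadj_of_nonadj v trivial a trivial ?_ ?_
        · rw [hfa]; exact hfvy
        · rw [hfa]; exact hH
  have hsk : IsSkeletalPair G Ix Iy := by
    by_contra h
    rcases hws Ix Iy hp h with h' | h'
    · exact hsx h'
    · exact hsy h'
  intro u w u' w' hu hw hu' hw' e1 e2
  exact skeletal_cb hdisj hsk ((hmemx u).mpr hu) ((hmemx u').mpr hu')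
    ((hmemy w').mpr hw') ((hmemy w).mpr hw) e1 e2

end Stmt13Aux

set_option maxHeartbeats 3000000 in
theorem stmt13 {V : Type*} [Fintype V] (b : Bool) (X : Finset (Fin 8))
    (hX : X ⊆ {2, 3})
    (G' : SimpleGraph V) (f : V → Fin 8)
    (ht : IsThickeningOn (exIG b ⊔ SimpleGraph.fromEdgeSet (exIM b)) (exIM b)
      ((↑X : Set (Fin 8))ᶜ) G' f)
    (hws : WeaklySkeletal G'
      {v | (f v = 0 ∨ f v = 1 ∨ f v = 2) ∧ f v ∉ X}
      {v | (f v = 3 ∨ f v = 4 ∨ f v = 5) ∧ f v ∉ X}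
      {v | f v = 6 ∨ f v = 7}) :
    ∃ T : Finset V, GoodTriad G' T := by
  classical
  have ht' : IsThickeningBetween (exIG b ⊔ SimpleGraph.fromEdgeSet (exIM b)) (exIM b)
      ((↑X : Set (Fin 8))ᶜ) G' Set.univ f := ht
  have hfin8 : ∀ x : Fin 8, x = 0 ∨ x = 1 ∨ x = 2 ∨ x = 3 ∨ x = 4 ∨ x = 5 ∨ x = 6 ∨ x = 7 := by
    decide
  have hnX : ∀ i : Fin 8, i ≠ 2 → i ≠ 3 → i ∈ ((↑X : Set (Fin 8)))ᶜ := by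
    intro i h2 h3 hmem
    have h23 := hX (by exact_mod_cast hmem)
    simp only [Finset.mem_insert, Finset.mem_singleton] at h23
    rcases h23 with h | h
    · exact h2 h
    · exact h3 h
  have hfX : ∀ v : V, f v ∈ ((↑X : Set (Fin 8)))ᶜ := fun v => ht'.maps_into v trivial
  have hfib : ∀ i : Fin 8, i ≠ 2 → i ≠ 3 → ∃ z : V, f z = i := by
    intro i h2 h3
    obtain ⟨z, -, hz⟩ := ht'.fibers_nonempty i (hnX i h2 h3)
    exact ⟨z, hz⟩
  have fne : ∀ {a c : V} {i j : Fin 8}, f a = i → f c = j → i ≠ j → a ≠ c := by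
    intro a c i j ha hc hij h
    exact hij (by rw [← ha, ← hc, h])
  have hA : ∀ i j : Fin 8, (exIG b ⊔ SimpleGraph.fromEdgeSet (exIM b)).Adj i j →
      s(i, j) ∉ exIM b → ∀ u v : V, f u = i → f v = j → G'.Adj u v := by
    intro i j hij hm u v hu hv
    refine ht'.adj_of_adj u trivial v trivial ?_ ?_ ?_
    · rw [hu, hv]; exact hij.ne
    · rw [hu, hv]; exact hij
    · rw [hu, hv]; exact hm
  have hN : ∀ i j : Fin 8, ¬(exIG b ⊔ SimpleGraph.fromEdgeSet (exIM b)).Adj i j → i ≠ j →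
      ∀ u v : V, f u = i → f v = j → ¬G'.Adj u v := by
    intro i j hij hne u v hu hv
    refine ht'.nonadj_of_nonadj u trivial v trivial ?_ ?_
    · rw [hu, hv]; exact hne
    · rw [hu, hv]; exact hij
  have hC : ∀ (i : Fin 8) (u v : V), f u = i → f v = i → u ≠ v → G'.Adj u v := by
    intro i u v hu hv huv
    exact ht'.fibers_clique i ⟨trivial, hu⟩ ⟨trivial, hv⟩ huv
  have hmemT : ∀ v u : V, u ∈ closedNbhdOn G' Set.univ v ↔ (u = v ∨ G'.Adj v u) :=
    fun v u => mem_cn G' v u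
  have hstrA : ∀ i : Fin 8, i = 0 ∨ i = 1 ∨ i = 2 →
      ¬ Straddles {v | (f v = 0 ∨ f v = 1 ∨ f v = 2) ∧ f v ∉ X}
        {v | (f v = 3 ∨ f v = 4 ∨ f v = 5) ∧ f v ∉ X} {v | f v = 6 ∨ f v = 7}
        (Finset.univ.filter (fun v => f v = i)) := by
    intro i hi hstr
    have hBr : ∀ v : V, v ∈ (↑(Finset.univ.filter (fun v => f v = i)) : Set V) →
        v ∉ {v : V | (f v = 3 ∨ f v = 4 ∨ f v = 5) ∧ f v ∉ X} := by
      intro v hv1 hv2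
      simp only [Finset.coe_filter, Finset.mem_univ, true_and, Set.mem_setOf_eq] at hv1
      simp only [Set.mem_setOf_eq] at hv2
      rw [hv1] at hv2
      rcases hi with rfl | rfl | rfl <;> rcases hv2.1 with h | h | h <;>
        exact absurd h (by decide)
    have hCr : ∀ v : V, v ∈ (↑(Finset.univ.filter (fun v => f v = i)) : Set V) →
        v ∉ {v : V | f v = 6 ∨ f v = 7} := by
      intro v hv1 hv2
      simp only [Finset.coe_filter, Finset.mem_univ, true_and, Set.mem_setOf_eq] at hv1
      simp only [Set.mem_setOf_eq] at hv2
      rw [hv1] at hv2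
      rcases hi with rfl | rfl | rfl <;> rcases hv2 with h | h <;>
        exact absurd h (by decide)
    rcases hstr with ⟨-, w, hw1, hw2⟩ | ⟨-, w, hw1, hw2⟩ | ⟨⟨w, hw1, hw2⟩, -⟩
    · exact hBr w hw1 hw2
    · exact hCr w hw1 hw2
    · exact hBr w hw1 hw2
  have hstrB : ∀ i : Fin 8, i = 3 ∨ i = 4 ∨ i = 5 →
      ¬ Straddles {v | (f v = 0 ∨ f v = 1 ∨ f v = 2) ∧ f v ∉ X}
        {v | (f v = 3 ∨ f v = 4 ∨ f v = 5) ∧ f v ∉ X} {v | f v = 6 ∨ f v = 7}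
        (Finset.univ.filter (fun v => f v = i)) := by
    intro i hi hstr
    have hAr : ∀ v : V, v ∈ (↑(Finset.univ.filter (fun v => f v = i)) : Set V) →
        v ∉ {v : V | (f v = 0 ∨ f v = 1 ∨ f v = 2) ∧ f v ∉ X} := by
      intro v hv1 hv2
      simp only [Finset.coe_filter, Finset.mem_univ, true_and, Set.mem_setOf_eq] at hv1
      simp only [Set.mem_setOf_eq] at hv2
      rw [hv1] at hv2
      rcases hi with rfl | rfl | rfl <;> rcases hv2.1 with h | h | h <;>
        exact absurd h (by decide)
    have hCr : ∀ v : V, v ∈ (↑(Finset.univ.filter (fun v => f v = i)) : Set V) →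
        v ∉ {v : V | f v = 6 ∨ f v = 7} := by
      intro v hv1 hv2
      simp only [Finset.coe_filter, Finset.mem_univ, true_and, Set.mem_setOf_eq] at hv1
      simp only [Set.mem_setOf_eq] at hv2
      rw [hv1] at hv2
      rcases hi with rfl | rfl | rfl <;> rcases hv2 with h | h <;>
        exact absurd h (by decide)
    rcases hstr with ⟨⟨w, hw1, hw2⟩, -⟩ | ⟨⟨w, hw1, hw2⟩, -⟩ | ⟨-, w, hw1, hw2⟩
    · exact hAr w hw1 hw2
    · exact hAr w hw1 hw2
    · exact hCr w hw1 hw2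
  cases b with
  | false =>
    obtain ⟨z0, hz0⟩ := hfib 0 (by decide) (by decide)
    obtain ⟨z1, hz1⟩ := hfib 1 (by decide) (by decide)
    obtain ⟨z4, hz4⟩ := hfib 4 (by decide) (by decide)
    obtain ⟨z6, hz6⟩ := hfib 6 (by decide) (by decide)
    have hMfin : ∀ e : Sym2 (Fin 8), e ∈ exIM false →
        e ∈ ({s(0,3), s(2,5)} : Finset (Sym2 (Fin 8))) := by
      intro e he
      simp only [exIM, Bool.false_eq_true, if_false, Set.union_empty, Set.mem_insert_iff,
        Set.mem_singleton_iff] at he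
      rcases he with rfl | rfl <;> decide
    have hMno1 : ∀ i : Fin 8,
        (∀ w : Fin 8, s(w, i) ∉ ({s(0,3), s(2,5)} : Finset (Sym2 (Fin 8)))) →
        ∀ w ∈ ((↑X : Set (Fin 8)))ᶜ, w ≠ i → s(w, i) ∉ exIM false :=
      fun i h w _ _ hmem => h w (hMfin _ hmem)
    refine ⟨{z1, z4, z6}, Set.subset_univ _,
      mkTriad (fne hz1 hz4 (by decide)) (fne hz1 hz6 (by decide)) (fne hz4 hz6 (by decide))
        (hN 1 4 (by simp [exIG, exIM]) (by decide) z1 z4 hz1 hz4)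
        (hN 1 6 (by simp [exIG, exIM]) (by decide) z1 z6 hz1 hz6)
        (hN 4 6 (by simp [exIG, exIM]) (by decide) z4 z6 hz4 hz6), ?_⟩
    intro v _ hvT
    simp only [Finset.mem_insert, Finset.mem_singleton, not_or] at hvT
    obtain ⟨hne1, hne4, hne6⟩ := hvT
    rcases hfin8 (f v) with hv | hv | hv | hv | hv | hv | hv | hv
    · exact Or.inl ⟨z1, by simp, z6, by simp, fne hz1 hz6 (by decide),
        hA 0 1 (by simp [exIG]) (by simp [exIM]) v z1 hv hz1,
        hA 0 6 (by simp [exIG]) (by simp [exIM]) v z6 hv hz6⟩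
    · exact Or.inr (Or.inl ⟨z1, by simp, twin_gen ht' (hMno1 1 (by decide)) hv hz1⟩)
    · exact Or.inl ⟨z1, by simp, z4, by simp, fne hz1 hz4 (by decide),
        (hA 1 2 (by simp [exIG]) (by simp [exIM]) z1 v hz1 hv).symm,
        hA 2 4 (by simp [exIG]) (by simp [exIM]) v z4 hv hz4⟩
    · exact Or.inl ⟨z1, by simp, z4, by simp, fne hz1 hz4 (by decide),
        (hA 1 3 (by simp [exIG]) (by simp [exIM]) z1 v hz1 hv).symm,
        hA 3 4 (by simp [exIG]) (by simp [exIM]) v z4 hv hz4⟩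
    · exact Or.inr (Or.inl ⟨z4, by simp, twin_gen ht' (hMno1 4 (by decide)) hv hz4⟩)
    · exact Or.inl ⟨z4, by simp, z6, by simp, fne hz4 hz6 (by decide),
        (hA 4 5 (by simp [exIG]) (by simp [exIM]) z4 v hz4 hv).symm,
        hA 5 6 (by simp [exIG]) (by simp [exIM]) v z6 hv hz6⟩
    · exact Or.inr (Or.inl ⟨z6, by simp, twin_gen ht' (hMno1 6 (by decide)) hv hz6⟩)
    · refine Or.inr (Or.inr ⟨z6, by simp, ?_⟩)
      rw [Set.ssubset_def]
      constructor
      · intro u hu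
        rw [hmemT] at hu ⊢
        rcases hfin8 (f u) with hu8 | hu8 | hu8 | hu8 | hu8 | hu8 | hu8 | hu8
        · rcases hu with rfl | hadj
          · exact absurd (hu8.symm.trans hv) (by decide)
          · exact absurd hadj.symm
              (hN 0 7 (by simp [exIG, exIM]) (by decide) u v hu8 hv)
        · rcases hu with rfl | hadj
          · exact absurd (hu8.symm.trans hv) (by decide)
          · exact absurd hadj.symm
              (hN 1 7 (by simp [exIG, exIM]) (by decide) u v hu8 hv)
        · rcases hu with rfl | hadj
          · exact absurd (hu8.symm.trans hv) (by decide)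
          · exact absurd hadj.symm
              (hN 2 7 (by simp [exIG, exIM]) (by decide) u v hu8 hv)
        · rcases hu with rfl | hadj
          · exact absurd (hu8.symm.trans hv) (by decide)
          · exact absurd hadj.symm
              (hN 3 7 (by simp [exIG, exIM]) (by decide) u v hu8 hv)
        · rcases hu with rfl | hadj
          · exact absurd (hu8.symm.trans hv) (by decide)
          · exact absurd hadj.symm
              (hN 4 7 (by simp [exIG, exIM]) (by decide) u v hu8 hv)
        · rcases hu with rfl | hadj
          · exact absurd (hu8.symm.trans hv) (by decide)
          · exact absurd hadj.symm
              (hN 5 7 (by simp [exIG, exIM]) (by decide) u v hu8 hv)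
        · rcases eq_or_ne u z6 with rfl | hne
          · exact Or.inl rfl
          · exact Or.inr (hC 6 z6 u hz6 hu8 (Ne.symm hne))
        · exact Or.inr (hA 6 7 (by simp [exIG]) (by simp [exIM]) z6 u hz6 hu8)
      · intro hsub
        have h0 : z0 ∈ closedNbhdOn G' Set.univ z6 := (hmemT z6 z0).mpr
          (Or.inr ((hA 0 6 (by simp [exIG]) (by simp [exIM]) z0 z6 hz0 hz6).symm))
        have h0v := hsub h0
        rw [hmemT] at h0v
        rcases h0v with h0v | h0v
        · rw [h0v, hv] at hz0
          exact absurd hz0 (by decide)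
        · exact hN 0 7 (by simp [exIG, exIM]) (by decide) z0 v hz0 hv h0v.symm
  | true =>
    obtain ⟨z0, hz0⟩ := hfib 0 (by decide) (by decide)
    obtain ⟨z6, hz6⟩ := hfib 6 (by decide) (by decide)
    obtain ⟨z7, hz7⟩ := hfib 7 (by decide) (by decide)
    have hMfin : ∀ e : Sym2 (Fin 8), e ∈ exIM true →
        e ∈ ({s(0,3), s(2,5), s(1,4)} : Finset (Sym2 (Fin 8))) := by
      intro e he
      simp only [exIM, if_true, Set.mem_union, Set.mem_insert_iff, Set.mem_singleton_iff] at he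
      rcases he with (rfl | rfl) | rfl <;> decide
    have hMno1 : ∀ i : Fin 8,
        (∀ w : Fin 8, s(w, i) ∉ ({s(0,3), s(2,5), s(1,4)} : Finset (Sym2 (Fin 8)))) →
        ∀ w ∈ ((↑X : Set (Fin 8)))ᶜ, w ≠ i → s(w, i) ∉ exIM true :=
      fun i h w _ _ hmem => h w (hMfin _ hmem)
    have hMno2 : ∀ i j : Fin 8,
        (∀ w : Fin 8, w ≠ j → s(w, i) ∉ ({s(0,3), s(2,5), s(1,4)} : Finset (Sym2 (Fin 8)))) →
        ∀ w ∈ ((↑X : Set (Fin 8)))ᶜ, w ≠ i → w ≠ j → s(w, i) ∉ exIM true :=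
      fun i j h w _ _ hnej hmem => h w hnej (hMfin _ hmem)
    have hm14 : s((1:Fin 8), 4) ∈ exIM true := by simp [exIM]
    have h1R := hnX 1 (by decide) (by decide)
    have h4R := hnX 4 (by decide) (by decide)
    obtain ⟨u1, -, w1, -, hu1, hw1, e14⟩ := ht'.semi_adj 1 h1R 4 h4R hm14
    have cb14 := pairCB ht' h1R h4R (by decide) hm14
      (hMno2 1 4 (by decide)) (fun w hw h1 h4 => hMno2 4 1 (by decide) w hw h4 h1)
      hws (hstrA 1 (by decide)) (hstrB 4 (by decide))
    have hcb14 : ∀ t u : V, f t = 1 → f u = 4 → (∃ w, f w = 4 ∧ G'.Adj t w) →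
        (∃ w, f w = 1 ∧ G'.Adj w u) → G'.Adj t u := by
      rintro t u h1 h4 ⟨w, hw, htw⟩ ⟨w', hw', hwu⟩
      exact cb14 t w w' u h1 hw hw' h4 htw hwu
    have hcb41 : ∀ t u : V, f t = 4 → f u = 1 → (∃ w, f w = 1 ∧ G'.Adj t w) →
        (∃ w, f w = 4 ∧ G'.Adj w u) → G'.Adj t u := by
      rintro t u h4 h1 ⟨w, hw, htw⟩ ⟨w', hw', hwu⟩
      exact (cb14 u w' w t h1 hw' hw h4 hwu.symm htw.symm).symm
    have tm14 := twinM ht' (x := 1) (y := 4) (by decide) (hMno2 1 4 (by decide)) hcb14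
    have tm41 := twinM ht' (x := 4) (y := 1) (by decide)
      (fun w hw h4 h1 => hMno2 4 1 (by decide) w hw h4 h1) hcb41
    by_cases hB : ∀ u : V, f u = 4 → ∃ w, f w = 1 ∧ G'.Adj u w
    · -- every vertex in fiber 4 has a neighbour in fiber 1
      have hadj14all : ∀ u : V, f u = 4 → G'.Adj u1 u := by
        intro u h4
        obtain ⟨w'', hw'', hadj''⟩ := hB u h4
        exact cb14 u1 w1 w'' u hu1 hw1 hw'' h4 e14 hadj''.symm
      by_cases h2X : (2 : Fin 8) ∈ X
      · -- fiber 2 is empty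
        obtain ⟨z5, hz5⟩ := hfib 5 (by decide) (by decide)
        have hM5 : ∀ w ∈ ((↑X : Set (Fin 8)))ᶜ, w ≠ 5 → s(w, 5) ∉ exIM true := by
          intro w hwR hne hmem
          have h3 := hMfin _ hmem
          have hw2 : w ≠ 2 := fun h => hwR (by rw [h]; exact_mod_cast h2X)
          exact (by decide : ∀ w0 : Fin 8, w0 ≠ 2 → w0 ≠ 5 →
            s(w0, 5) ∉ ({s(0,3), s(2,5), s(1,4)} : Finset (Sym2 (Fin 8)))) w hw2 hne h3
        refine ⟨{u1, z5, z7}, Set.subset_univ _,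
          mkTriad (fne hu1 hz5 (by decide)) (fne hu1 hz7 (by decide)) (fne hz5 hz7 (by decide))
            (hN 1 5 (by simp [exIG, exIM]) (by decide) u1 z5 hu1 hz5)
            (hN 1 7 (by simp [exIG, exIM]) (by decide) u1 z7 hu1 hz7)
            (hN 5 7 (by simp [exIG, exIM]) (by decide) z5 z7 hz5 hz7), ?_⟩
        intro v _ hvT
        simp only [Finset.mem_insert, Finset.mem_singleton, not_or] at hvT
        obtain ⟨hne1, hne5, hne7⟩ := hvT
        rcases hfin8 (f v) with hv | hv | hv | hv | hv | hv | hv | hv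
        · exact Or.inl ⟨u1, by simp, z5, by simp, fne hu1 hz5 (by decide),
            hA 0 1 (by simp [exIG]) (by simp [exIM]) v u1 hv hu1,
            hA 0 5 (by simp [exIG]) (by simp [exIM]) v z5 hv hz5⟩
        · by_cases hvN : ∃ w, f w = 4 ∧ G'.Adj v w
          · exact Or.inr (Or.inl ⟨u1, by simp,
              tm14.1 v u1 hv hu1 (iff_of_true hvN ⟨w1, hw1, e14⟩)⟩)
          · exact Or.inr (Or.inr ⟨u1, by simp,
              tm14.2 v u1 hv hu1 hvN ⟨w1, hw1, e14⟩⟩)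
        · exact absurd (show f v ∈ (↑X : Set (Fin 8)) by
            rw [hv]; exact_mod_cast h2X) (hfX v)
        · exact Or.inl ⟨u1, by simp, z5, by simp, fne hu1 hz5 (by decide),
            (hA 1 3 (by simp [exIG]) (by simp [exIM]) u1 v hu1 hv).symm,
            hA 3 5 (by simp [exIG]) (by simp [exIM]) v z5 hv hz5⟩
        · exact Or.inl ⟨u1, by simp, z5, by simp, fne hu1 hz5 (by decide),
            (hadj14all v hv).symm,
            hA 4 5 (by simp [exIG]) (by simp [exIM]) v z5 hv hz5⟩
        · exact Or.inr (Or.inl ⟨z5, by simp, twin_gen ht' hM5 hv hz5⟩)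
        · exact Or.inl ⟨z5, by simp, z7, by simp, fne hz5 hz7 (by decide),
            (hA 5 6 (by simp [exIG]) (by simp [exIM]) z5 v hz5 hv).symm,
            hA 6 7 (by simp [exIG]) (by simp [exIM]) v z7 hv hz7⟩
        · exact Or.inr (Or.inl ⟨z7, by simp, twin_gen ht' (hMno1 7 (by decide)) hv hz7⟩)
      · -- fiber 2 is nonempty
        have h2R : (2 : Fin 8) ∈ ((↑X : Set (Fin 8)))ᶜ := fun hmem => h2X (by exact_mod_cast hmem)
        have h5R := hnX 5 (by decide) (by decide)
        have hm25 : s((2:Fin 8), 5) ∈ exIM true := by simp [exIM]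
        obtain ⟨u2, -, w5, -, hu2, hw5, e25⟩ := ht'.semi_adj 2 h2R 5 h5R hm25
        have cb25 := pairCB ht' h2R h5R (by decide) hm25
          (hMno2 2 5 (by decide)) (fun w hw h2 h5 => hMno2 5 2 (by decide) w hw h5 h2)
          hws (hstrA 2 (by decide)) (hstrB 5 (by decide))
        have hcb52 : ∀ t u : V, f t = 5 → f u = 2 → (∃ w, f w = 2 ∧ G'.Adj t w) →
            (∃ w, f w = 5 ∧ G'.Adj w u) → G'.Adj t u := by
          rintro t u h5 h2 ⟨w, hw, htw⟩ ⟨w', hw', hwu⟩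
          exact (cb25 u w' w t h2 hw' hw h5 hwu.symm htw.symm).symm
        have tm52 := twinM ht' (x := 5) (y := 2) (by decide)
          (fun w hw h5 h2 => hMno2 5 2 (by decide) w hw h5 h2) hcb52
        refine ⟨{u1, w5, z7}, Set.subset_univ _,
          mkTriad (fne hu1 hw5 (by decide)) (fne hu1 hz7 (by decide)) (fne hw5 hz7 (by decide))
            (hN 1 5 (by simp [exIG, exIM]) (by decide) u1 w5 hu1 hw5)
            (hN 1 7 (by simp [exIG, exIM]) (by decide) u1 z7 hu1 hz7)
            (hN 5 7 (by simp [exIG, exIM]) (by decide) w5 z7 hw5 hz7), ?_⟩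
        intro v _ hvT
        simp only [Finset.mem_insert, Finset.mem_singleton, not_or] at hvT
        obtain ⟨hne1, hne5, hne7⟩ := hvT
        rcases hfin8 (f v) with hv | hv | hv | hv | hv | hv | hv | hv
        · exact Or.inl ⟨u1, by simp, w5, by simp, fne hu1 hw5 (by decide),
            hA 0 1 (by simp [exIG]) (by simp [exIM]) v u1 hv hu1,
            hA 0 5 (by simp [exIG]) (by simp [exIM]) v w5 hv hw5⟩
        · by_cases hvN : ∃ w, f w = 4 ∧ G'.Adj v w
          · exact Or.inr (Or.inl ⟨u1, by simp,
              tm14.1 v u1 hv hu1 (iff_of_true hvN ⟨w1, hw1, e14⟩)⟩)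
          · exact Or.inr (Or.inr ⟨u1, by simp,
              tm14.2 v u1 hv hu1 hvN ⟨w1, hw1, e14⟩⟩)
        · by_cases hv5 : ∃ w, f w = 5 ∧ G'.Adj v w
          · obtain ⟨w'', hw'', hadj''⟩ := hv5
            exact Or.inl ⟨u1, by simp, w5, by simp, fne hu1 hw5 (by decide),
              (hA 1 2 (by simp [exIG]) (by simp [exIM]) u1 v hu1 hv).symm,
              cb25 v w'' u2 w5 hv hw'' hu2 hw5 hadj'' e25⟩
          · refine Or.inr (Or.inl ⟨u1, by simp, ?_⟩)
            ext u
            rw [hmemT, hmemT]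
            constructor
            · intro h
              rcases hfin8 (f u) with hu8 | hu8 | hu8 | hu8 | hu8 | hu8 | hu8 | hu8
              · exact Or.inr ((hA 0 1 (by simp [exIG]) (by simp [exIM]) u u1 hu8 hu1).symm)
              · rcases eq_or_ne u u1 with rfl | hne
                · exact Or.inl rfl
                · exact Or.inr (hC 1 u1 u hu1 hu8 (Ne.symm hne))
              · exact Or.inr (hA 1 2 (by simp [exIG]) (by simp [exIM]) u1 u hu1 hu8)
              · exact Or.inr (hA 1 3 (by simp [exIG]) (by simp [exIM]) u1 u hu1 hu8)
              · exact Or.inr (hadj14all u hu8)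
              · rcases h with rfl | hadj
                · exact absurd (hu8.symm.trans hv) (by decide)
                · exact absurd ⟨u, hu8, hadj⟩ hv5
              · rcases h with rfl | hadj
                · exact absurd (hu8.symm.trans hv) (by decide)
                · exact absurd hadj
                    (hN 2 6 (by simp [exIG, exIM]) (by decide) v u hv hu8)
              · rcases h with rfl | hadj
                · exact absurd (hu8.symm.trans hv) (by decide)
                · exact absurd hadj
                    (hN 2 7 (by simp [exIG, exIM]) (by decide) v u hv hu8)
            · intro h
              rcases hfin8 (f u) with hu8 | hu8 | hu8 | hu8 | hu8 | hu8 | hu8 | hu8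
              · exact Or.inr ((hA 0 2 (by simp [exIG]) (by simp [exIM]) u v hu8 hv).symm)
              · exact Or.inr ((hA 1 2 (by simp [exIG]) (by simp [exIM]) u v hu8 hv).symm)
              · rcases eq_or_ne u v with rfl | hne
                · exact Or.inl rfl
                · exact Or.inr (hC 2 v u hv hu8 (Ne.symm hne))
              · exact Or.inr (hA 2 3 (by simp [exIG]) (by simp [exIM]) v u hv hu8)
              · exact Or.inr (hA 2 4 (by simp [exIG]) (by simp [exIM]) v u hv hu8)
              · rcases h with rfl | hadj
                · exact absurd (hu8.symm.trans hu1) (by decide)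
                · exact absurd hadj
                    (hN 1 5 (by simp [exIG, exIM]) (by decide) u1 u hu1 hu8)
              · rcases h with rfl | hadj
                · exact absurd (hu8.symm.trans hu1) (by decide)
                · exact absurd hadj
                    (hN 1 6 (by simp [exIG, exIM]) (by decide) u1 u hu1 hu8)
              · rcases h with rfl | hadj
                · exact absurd (hu8.symm.trans hu1) (by decide)
                · exact absurd hadj
                    (hN 1 7 (by simp [exIG, exIM]) (by decide) u1 u hu1 hu8)
        · exact Or.inl ⟨u1, by simp, w5, by simp, fne hu1 hw5 (by decide),
            (hA 1 3 (by simp [exIG]) (by simp [exIM]) u1 v hu1 hv).symm,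
            hA 3 5 (by simp [exIG]) (by simp [exIM]) v w5 hv hw5⟩
        · exact Or.inl ⟨u1, by simp, w5, by simp, fne hu1 hw5 (by decide),
            (hadj14all v hv).symm,
            hA 4 5 (by simp [exIG]) (by simp [exIM]) v w5 hv hw5⟩
        · by_cases hv2 : ∃ w, f w = 2 ∧ G'.Adj v w
          · exact Or.inr (Or.inl ⟨w5, by simp,
              tm52.1 v w5 hv hw5 (iff_of_true hv2 ⟨u2, hu2, e25.symm⟩)⟩)
          · exact Or.inr (Or.inr ⟨w5, by simp,
              tm52.2 v w5 hv hw5 hv2 ⟨u2, hu2, e25.symm⟩⟩)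
        · exact Or.inl ⟨w5, by simp, z7, by simp, fne hw5 hz7 (by decide),
            (hA 5 6 (by simp [exIG]) (by simp [exIM]) w5 v hw5 hv).symm,
            hA 6 7 (by simp [exIG]) (by simp [exIM]) v z7 hv hz7⟩
        · exact Or.inr (Or.inl ⟨z7, by simp, twin_gen ht' (hMno1 7 (by decide)) hv hz7⟩)
    · -- some vertex in fiber 4 has no neighbour in fiber 1
      push_neg at hB
      obtain ⟨w4, hw4, hw4n⟩ := hB
      refine ⟨{u1, w4, z6}, Set.subset_univ _,
        mkTriad (fne hu1 hw4 (by decide)) (fne hu1 hz6 (by decide)) (fne hw4 hz6 (by decide))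
          (fun h => hw4n u1 hu1 h.symm)
          (hN 1 6 (by simp [exIG, exIM]) (by decide) u1 z6 hu1 hz6)
          (hN 4 6 (by simp [exIG, exIM]) (by decide) w4 z6 hw4 hz6), ?_⟩
      intro v _ hvT
      simp only [Finset.mem_insert, Finset.mem_singleton, not_or] at hvT
      obtain ⟨hne1, hne4, hne6⟩ := hvT
      rcases hfin8 (f v) with hv | hv | hv | hv | hv | hv | hv | hv
      · exact Or.inl ⟨u1, by simp, z6, by simp, fne hu1 hz6 (by decide),
          hA 0 1 (by simp [exIG]) (by simp [exIM]) v u1 hv hu1,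
          hA 0 6 (by simp [exIG]) (by simp [exIM]) v z6 hv hz6⟩
      · by_cases hvN : ∃ w, f w = 4 ∧ G'.Adj v w
        · exact Or.inr (Or.inl ⟨u1, by simp,
            tm14.1 v u1 hv hu1 (iff_of_true hvN ⟨w1, hw1, e14⟩)⟩)
        · exact Or.inr (Or.inr ⟨u1, by simp,
            tm14.2 v u1 hv hu1 hvN ⟨w1, hw1, e14⟩⟩)
      · exact Or.inl ⟨u1, by simp, w4, by simp, fne hu1 hw4 (by decide),
          (hA 1 2 (by simp [exIG]) (by simp [exIM]) u1 v hu1 hv).symm,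
          hA 2 4 (by simp [exIG]) (by simp [exIM]) v w4 hv hw4⟩
      · exact Or.inl ⟨u1, by simp, w4, by simp, fne hu1 hw4 (by decide),
          (hA 1 3 (by simp [exIG]) (by simp [exIM]) u1 v hu1 hv).symm,
          hA 3 4 (by simp [exIG]) (by simp [exIM]) v w4 hv hw4⟩
      · by_cases hvN : ∃ w, f w = 1 ∧ G'.Adj v w
        · exact Or.inl ⟨u1, by simp, w4, by simp, fne hu1 hw4 (by decide),
            hcb41 v u1 hv hu1 hvN ⟨w1, hw1, e14.symm⟩,
            hC 4 v w4 hv hw4 hne4⟩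
        · refine Or.inr (Or.inl ⟨w4, by simp, tm41.1 v w4 hv hw4 (iff_of_false hvN ?_)⟩)
          rintro ⟨w, hw, hadj⟩
          exact hw4n w hw hadj
      · exact Or.inl ⟨w4, by simp, z6, by simp, fne hw4 hz6 (by decide),
          (hA 4 5 (by simp [exIG]) (by simp [exIM]) w4 v hw4 hv).symm,
          hA 5 6 (by simp [exIG]) (by simp [exIM]) v z6 hv hz6⟩
      · exact Or.inr (Or.inl ⟨z6, by simp, twin_gen ht' (hMno1 6 (by decide)) hv hz6⟩)
      · refine Or.inr (Or.inr ⟨z6, by simp, ?_⟩)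
        rw [Set.ssubset_def]
        constructor
        · intro u hu
          rw [hmemT] at hu ⊢
          rcases hfin8 (f u) with hu8 | hu8 | hu8 | hu8 | hu8 | hu8 | hu8 | hu8
          · rcases hu with rfl | hadj
            · exact absurd (hu8.symm.trans hv) (by decide)
            · exact absurd hadj.symm
                (hN 0 7 (by simp [exIG, exIM]) (by decide) u v hu8 hv)
          · rcases hu with rfl | hadj
            · exact absurd (hu8.symm.trans hv) (by decide)
            · exact absurd hadj.symm
                (hN 1 7 (by simp [exIG, exIM]) (by decide) u v hu8 hv)
          · rcases hu with rfl | hadj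
            · exact absurd (hu8.symm.trans hv) (by decide)
            · exact absurd hadj.symm
                (hN 2 7 (by simp [exIG, exIM]) (by decide) u v hu8 hv)
          · rcases hu with rfl | hadj
            · exact absurd (hu8.symm.trans hv) (by decide)
            · exact absurd hadj.symm
                (hN 3 7 (by simp [exIG, exIM]) (by decide) u v hu8 hv)
          · rcases hu with rfl | hadj
            · exact absurd (hu8.symm.trans hv) (by decide)
            · exact absurd hadj.symm
                (hN 4 7 (by simp [exIG, exIM]) (by decide) u v hu8 hv)
          · rcases hu with rfl | hadj
            · exact absurd (hu8.symm.trans hv) (by decide)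
            · exact absurd hadj.symm
                (hN 5 7 (by simp [exIG, exIM]) (by decide) u v hu8 hv)
          · rcases eq_or_ne u z6 with rfl | hne
            · exact Or.inl rfl
            · exact Or.inr (hC 6 z6 u hz6 hu8 (Ne.symm hne))
          · exact Or.inr (hA 6 7 (by simp [exIG]) (by simp [exIM]) z6 u hz6 hu8)
        · intro hsub
          have h0 : z0 ∈ closedNbhdOn G' Set.univ z6 := (hmemT z6 z0).mpr
            (Or.inr ((hA 0 6 (by simp [exIG]) (by simp [exIM]) z0 z6 hz0 hz6).symm))
          have h0v := hsub h0
          rw [hmemT] at h0v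
          rcases h0v with h0v | h0v
          · rw [h0v, hv] at hz0
            exact absurd hz0 (by decide)
          · exact hN 0 7 (by simp [exIG, exIM]) (by decide) z0 v hz0 hv h0v.symm


end Paper
end

section
/- Let G be a graph on v1,…,v9 in which A = {v1,v2}, B = {v7,v8}, and C = {v3,v4,v5,v6,v9} are cliques; v1 is adjacent to v3, v8, v9; v8 is adjacent to v6 and v9; v2 is adjacent to v3 and possibly to v4; v7 is adjacent to v6 and possibly to v5; and there are no other edges between distinct cliques. Let M be a matching in G containing v1v3 and v6v8, and possibly v2v4 (if v2v4 ∈ E(G)) and v5v7 (if v5v7 ∈ E(G)). Let X ⊆ {v3,v4,v5,v6} be such that v2 and v7 each have a neighbour in C ∖ X, and such that if X contains neither v4 nor v5 then v2 is adjacent to v4 and v7 is adjacent to v5. Suppose every vertex of (G − M) − X lies in a triad. Let G' be a thickening of G − X under M (pairs of M meeting X being discarded), and suppose the three-cliqued graph (G', I(A), I(B), I(C ∖ X)) is weakly skeletal. Then G' contains a good triad. -/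
open SimpleGraph

namespace Paper

variable {V : Type*} {W : Type*}

private lemma eA01 (b24 b75 : Bool) : (exIIG b24 b75).Adj 0 1 := by
  rw [exIIG, SimpleGraph.fromEdgeSet_adj]
  refine ⟨Set.mem_union_left _ (Set.mem_union_left _ ?_), by decide⟩
  simp [Sym2.eq_iff]

private lemma eA10 (b24 b75 : Bool) : (exIIG b24 b75).Adj 1 0 := by
  rw [exIIG, SimpleGraph.fromEdgeSet_adj]
  refine ⟨Set.mem_union_left _ (Set.mem_union_left _ ?_), by decide⟩
  simp [Sym2.eq_iff]

private lemma eA12 (b24 b75 : Bool) : (exIIG b24 b75).Adj 1 2 := by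
  rw [exIIG, SimpleGraph.fromEdgeSet_adj]
  refine ⟨Set.mem_union_left _ (Set.mem_union_left _ ?_), by decide⟩
  simp [Sym2.eq_iff]

private lemma eA21 (b24 b75 : Bool) : (exIIG b24 b75).Adj 2 1 := by
  rw [exIIG, SimpleGraph.fromEdgeSet_adj]
  refine ⟨Set.mem_union_left _ (Set.mem_union_left _ ?_), by decide⟩
  simp [Sym2.eq_iff]

private lemma eA08 (b24 b75 : Bool) : (exIIG b24 b75).Adj 0 8 := by
  rw [exIIG, SimpleGraph.fromEdgeSet_adj]
  refine ⟨Set.mem_union_left _ (Set.mem_union_left _ ?_), by decide⟩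
  simp [Sym2.eq_iff]

private lemma eA80 (b24 b75 : Bool) : (exIIG b24 b75).Adj 8 0 := by
  rw [exIIG, SimpleGraph.fromEdgeSet_adj]
  refine ⟨Set.mem_union_left _ (Set.mem_union_left _ ?_), by decide⟩
  simp [Sym2.eq_iff]

private lemma eA28 (b24 b75 : Bool) : (exIIG b24 b75).Adj 2 8 := by
  rw [exIIG, SimpleGraph.fromEdgeSet_adj]
  refine ⟨Set.mem_union_left _ (Set.mem_union_left _ ?_), by decide⟩
  simp [Sym2.eq_iff]

private lemma eA82 (b24 b75 : Bool) : (exIIG b24 b75).Adj 8 2 := by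
  rw [exIIG, SimpleGraph.fromEdgeSet_adj]
  refine ⟨Set.mem_union_left _ (Set.mem_union_left _ ?_), by decide⟩
  simp [Sym2.eq_iff]

private lemma eA56 (b24 b75 : Bool) : (exIIG b24 b75).Adj 5 6 := by
  rw [exIIG, SimpleGraph.fromEdgeSet_adj]
  refine ⟨Set.mem_union_left _ (Set.mem_union_left _ ?_), by decide⟩
  simp [Sym2.eq_iff]

private lemma eA65 (b24 b75 : Bool) : (exIIG b24 b75).Adj 6 5 := by
  rw [exIIG, SimpleGraph.fromEdgeSet_adj]
  refine ⟨Set.mem_union_left _ (Set.mem_union_left _ ?_), by decide⟩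
  simp [Sym2.eq_iff]

private lemma eA58 (b24 b75 : Bool) : (exIIG b24 b75).Adj 5 8 := by
  rw [exIIG, SimpleGraph.fromEdgeSet_adj]
  refine ⟨Set.mem_union_left _ (Set.mem_union_left _ ?_), by decide⟩
  simp [Sym2.eq_iff]

private lemma eA85 (b24 b75 : Bool) : (exIIG b24 b75).Adj 8 5 := by
  rw [exIIG, SimpleGraph.fromEdgeSet_adj]
  refine ⟨Set.mem_union_left _ (Set.mem_union_left _ ?_), by decide⟩
  simp [Sym2.eq_iff]

private lemma eA67 (b24 b75 : Bool) : (exIIG b24 b75).Adj 6 7 := by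
  rw [exIIG, SimpleGraph.fromEdgeSet_adj]
  refine ⟨Set.mem_union_left _ (Set.mem_union_left _ ?_), by decide⟩
  simp [Sym2.eq_iff]

private lemma eA76 (b24 b75 : Bool) : (exIIG b24 b75).Adj 7 6 := by
  rw [exIIG, SimpleGraph.fromEdgeSet_adj]
  refine ⟨Set.mem_union_left _ (Set.mem_union_left _ ?_), by decide⟩
  simp [Sym2.eq_iff]

private lemma eA78 (b24 b75 : Bool) : (exIIG b24 b75).Adj 7 8 := by
  rw [exIIG, SimpleGraph.fromEdgeSet_adj]
  refine ⟨Set.mem_union_left _ (Set.mem_union_left _ ?_), by decide⟩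
  simp [Sym2.eq_iff]

private lemma eA87 (b24 b75 : Bool) : (exIIG b24 b75).Adj 8 7 := by
  rw [exIIG, SimpleGraph.fromEdgeSet_adj]
  refine ⟨Set.mem_union_left _ (Set.mem_union_left _ ?_), by decide⟩
  simp [Sym2.eq_iff]

private lemma eA38 (b24 b75 : Bool) : (exIIG b24 b75).Adj 3 8 := by
  rw [exIIG, SimpleGraph.fromEdgeSet_adj]
  refine ⟨Set.mem_union_left _ (Set.mem_union_left _ ?_), by decide⟩
  simp [Sym2.eq_iff]

private lemma eA83 (b24 b75 : Bool) : (exIIG b24 b75).Adj 8 3 := by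
  rw [exIIG, SimpleGraph.fromEdgeSet_adj]
  refine ⟨Set.mem_union_left _ (Set.mem_union_left _ ?_), by decide⟩
  simp [Sym2.eq_iff]

private lemma eA48 (b24 b75 : Bool) : (exIIG b24 b75).Adj 4 8 := by
  rw [exIIG, SimpleGraph.fromEdgeSet_adj]
  refine ⟨Set.mem_union_left _ (Set.mem_union_left _ ?_), by decide⟩
  simp [Sym2.eq_iff]

private lemma eA84 (b24 b75 : Bool) : (exIIG b24 b75).Adj 8 4 := by
  rw [exIIG, SimpleGraph.fromEdgeSet_adj]
  refine ⟨Set.mem_union_left _ (Set.mem_union_left _ ?_), by decide⟩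
  simp [Sym2.eq_iff]

private lemma eA23 (b24 b75 : Bool) : (exIIG b24 b75).Adj 2 3 := by
  rw [exIIG, SimpleGraph.fromEdgeSet_adj]
  refine ⟨Set.mem_union_left _ (Set.mem_union_left _ ?_), by decide⟩
  simp [Sym2.eq_iff]

private lemma eA32 (b24 b75 : Bool) : (exIIG b24 b75).Adj 3 2 := by
  rw [exIIG, SimpleGraph.fromEdgeSet_adj]
  refine ⟨Set.mem_union_left _ (Set.mem_union_left _ ?_), by decide⟩
  simp [Sym2.eq_iff]

private lemma eA24 (b24 b75 : Bool) : (exIIG b24 b75).Adj 2 4 := by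
  rw [exIIG, SimpleGraph.fromEdgeSet_adj]
  refine ⟨Set.mem_union_left _ (Set.mem_union_left _ ?_), by decide⟩
  simp [Sym2.eq_iff]

private lemma eA42 (b24 b75 : Bool) : (exIIG b24 b75).Adj 4 2 := by
  rw [exIIG, SimpleGraph.fromEdgeSet_adj]
  refine ⟨Set.mem_union_left _ (Set.mem_union_left _ ?_), by decide⟩
  simp [Sym2.eq_iff]

private lemma eA34 (b24 b75 : Bool) : (exIIG b24 b75).Adj 3 4 := by
  rw [exIIG, SimpleGraph.fromEdgeSet_adj]
  refine ⟨Set.mem_union_left _ (Set.mem_union_left _ ?_), by decide⟩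
  simp [Sym2.eq_iff]

private lemma eA43 (b24 b75 : Bool) : (exIIG b24 b75).Adj 4 3 := by
  rw [exIIG, SimpleGraph.fromEdgeSet_adj]
  refine ⟨Set.mem_union_left _ (Set.mem_union_left _ ?_), by decide⟩
  simp [Sym2.eq_iff]

private lemma eA35 (b24 b75 : Bool) : (exIIG b24 b75).Adj 3 5 := by
  rw [exIIG, SimpleGraph.fromEdgeSet_adj]
  refine ⟨Set.mem_union_left _ (Set.mem_union_left _ ?_), by decide⟩
  simp [Sym2.eq_iff]

private lemma eA53 (b24 b75 : Bool) : (exIIG b24 b75).Adj 5 3 := by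
  rw [exIIG, SimpleGraph.fromEdgeSet_adj]
  refine ⟨Set.mem_union_left _ (Set.mem_union_left _ ?_), by decide⟩
  simp [Sym2.eq_iff]

private lemma eA45 (b24 b75 : Bool) : (exIIG b24 b75).Adj 4 5 := by
  rw [exIIG, SimpleGraph.fromEdgeSet_adj]
  refine ⟨Set.mem_union_left _ (Set.mem_union_left _ ?_), by decide⟩
  simp [Sym2.eq_iff]

private lemma eA54 (b24 b75 : Bool) : (exIIG b24 b75).Adj 5 4 := by
  rw [exIIG, SimpleGraph.fromEdgeSet_adj]
  refine ⟨Set.mem_union_left _ (Set.mem_union_left _ ?_), by decide⟩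
  simp [Sym2.eq_iff]

private lemma eN14 (b24 b75 : Bool) : ¬(exIIG b24 b75).Adj 1 4 := by
  rw [exIIG, SimpleGraph.fromEdgeSet_adj]
  rintro ⟨(h | h) | h, -⟩ <;> simp [Sym2.eq_iff] at h

private lemma eN41 (b24 b75 : Bool) : ¬(exIIG b24 b75).Adj 4 1 := by
  rw [exIIG, SimpleGraph.fromEdgeSet_adj]
  rintro ⟨(h | h) | h, -⟩ <;> simp [Sym2.eq_iff] at h

private lemma eN15 (b24 b75 : Bool) : ¬(exIIG b24 b75).Adj 1 5 := by
  rw [exIIG, SimpleGraph.fromEdgeSet_adj]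
  rintro ⟨(h | h) | h, -⟩ <;> simp [Sym2.eq_iff] at h

private lemma eN51 (b24 b75 : Bool) : ¬(exIIG b24 b75).Adj 5 1 := by
  rw [exIIG, SimpleGraph.fromEdgeSet_adj]
  rintro ⟨(h | h) | h, -⟩ <;> simp [Sym2.eq_iff] at h

private lemma eN16 (b24 b75 : Bool) : ¬(exIIG b24 b75).Adj 1 6 := by
  rw [exIIG, SimpleGraph.fromEdgeSet_adj]
  rintro ⟨(h | h) | h, -⟩ <;> simp [Sym2.eq_iff] at h

private lemma eN61 (b24 b75 : Bool) : ¬(exIIG b24 b75).Adj 6 1 := by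
  rw [exIIG, SimpleGraph.fromEdgeSet_adj]
  rintro ⟨(h | h) | h, -⟩ <;> simp [Sym2.eq_iff] at h

private lemma eN17 (b24 b75 : Bool) : ¬(exIIG b24 b75).Adj 1 7 := by
  rw [exIIG, SimpleGraph.fromEdgeSet_adj]
  rintro ⟨(h | h) | h, -⟩ <;> simp [Sym2.eq_iff] at h

private lemma eN71 (b24 b75 : Bool) : ¬(exIIG b24 b75).Adj 7 1 := by
  rw [exIIG, SimpleGraph.fromEdgeSet_adj]
  rintro ⟨(h | h) | h, -⟩ <;> simp [Sym2.eq_iff] at h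

private lemma eN18 (b24 b75 : Bool) : ¬(exIIG b24 b75).Adj 1 8 := by
  rw [exIIG, SimpleGraph.fromEdgeSet_adj]
  rintro ⟨(h | h) | h, -⟩ <;> simp [Sym2.eq_iff] at h

private lemma eN81 (b24 b75 : Bool) : ¬(exIIG b24 b75).Adj 8 1 := by
  rw [exIIG, SimpleGraph.fromEdgeSet_adj]
  rintro ⟨(h | h) | h, -⟩ <;> simp [Sym2.eq_iff] at h

private lemma eN03 (b24 b75 : Bool) : ¬(exIIG b24 b75).Adj 0 3 := by
  rw [exIIG, SimpleGraph.fromEdgeSet_adj]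
  rintro ⟨(h | h) | h, -⟩ <;> simp [Sym2.eq_iff] at h

private lemma eN30 (b24 b75 : Bool) : ¬(exIIG b24 b75).Adj 3 0 := by
  rw [exIIG, SimpleGraph.fromEdgeSet_adj]
  rintro ⟨(h | h) | h, -⟩ <;> simp [Sym2.eq_iff] at h

private lemma eN04 (b24 b75 : Bool) : ¬(exIIG b24 b75).Adj 0 4 := by
  rw [exIIG, SimpleGraph.fromEdgeSet_adj]
  rintro ⟨(h | h) | h, -⟩ <;> simp [Sym2.eq_iff] at h

private lemma eN40 (b24 b75 : Bool) : ¬(exIIG b24 b75).Adj 4 0 := by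
  rw [exIIG, SimpleGraph.fromEdgeSet_adj]
  rintro ⟨(h | h) | h, -⟩ <;> simp [Sym2.eq_iff] at h

private lemma eN06 (b24 b75 : Bool) : ¬(exIIG b24 b75).Adj 0 6 := by
  rw [exIIG, SimpleGraph.fromEdgeSet_adj]
  rintro ⟨(h | h) | h, -⟩ <;> simp [Sym2.eq_iff] at h

private lemma eN60 (b24 b75 : Bool) : ¬(exIIG b24 b75).Adj 6 0 := by
  rw [exIIG, SimpleGraph.fromEdgeSet_adj]
  rintro ⟨(h | h) | h, -⟩ <;> simp [Sym2.eq_iff] at h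

private lemma eN26 (b24 b75 : Bool) : ¬(exIIG b24 b75).Adj 2 6 := by
  rw [exIIG, SimpleGraph.fromEdgeSet_adj]
  rintro ⟨(h | h) | h, -⟩ <;> simp [Sym2.eq_iff] at h

private lemma eN62 (b24 b75 : Bool) : ¬(exIIG b24 b75).Adj 6 2 := by
  rw [exIIG, SimpleGraph.fromEdgeSet_adj]
  rintro ⟨(h | h) | h, -⟩ <;> simp [Sym2.eq_iff] at h

private lemma eN36 (b24 b75 : Bool) : ¬(exIIG b24 b75).Adj 3 6 := by
  rw [exIIG, SimpleGraph.fromEdgeSet_adj]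
  rintro ⟨(h | h) | h, -⟩ <;> simp [Sym2.eq_iff] at h

private lemma eN63 (b24 b75 : Bool) : ¬(exIIG b24 b75).Adj 6 3 := by
  rw [exIIG, SimpleGraph.fromEdgeSet_adj]
  rintro ⟨(h | h) | h, -⟩ <;> simp [Sym2.eq_iff] at h

private lemma eN37 (b24 b75 : Bool) : ¬(exIIG b24 b75).Adj 3 7 := by
  rw [exIIG, SimpleGraph.fromEdgeSet_adj]
  rintro ⟨(h | h) | h, -⟩ <;> simp [Sym2.eq_iff] at h

private lemma eN73 (b24 b75 : Bool) : ¬(exIIG b24 b75).Adj 7 3 := by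
  rw [exIIG, SimpleGraph.fromEdgeSet_adj]
  rintro ⟨(h | h) | h, -⟩ <;> simp [Sym2.eq_iff] at h

private lemma eN47 (b24 b75 : Bool) : ¬(exIIG b24 b75).Adj 4 7 := by
  rw [exIIG, SimpleGraph.fromEdgeSet_adj]
  rintro ⟨(h | h) | h, -⟩ <;> simp [Sym2.eq_iff] at h

private lemma eN74 (b24 b75 : Bool) : ¬(exIIG b24 b75).Adj 7 4 := by
  rw [exIIG, SimpleGraph.fromEdgeSet_adj]
  rintro ⟨(h | h) | h, -⟩ <;> simp [Sym2.eq_iff] at h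

private lemma eN68 (b24 b75 : Bool) : ¬(exIIG b24 b75).Adj 6 8 := by
  rw [exIIG, SimpleGraph.fromEdgeSet_adj]
  rintro ⟨(h | h) | h, -⟩ <;> simp [Sym2.eq_iff] at h

private lemma eN86 (b24 b75 : Bool) : ¬(exIIG b24 b75).Adj 8 6 := by
  rw [exIIG, SimpleGraph.fromEdgeSet_adj]
  rintro ⟨(h | h) | h, -⟩ <;> simp [Sym2.eq_iff] at h


private lemma fin9_cases (c : Fin 9) :
    c = 0 ∨ c = 1 ∨ c = 2 ∨ c = 3 ∨ c = 4 ∨ c = 5 ∨ c = 6 ∨ c = 7 ∨ c = 8 := by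
  revert c; decide

private lemma cliqueNumOn_exists {V : Type*} [Fintype V] (G : SimpleGraph V) (S : Set V) :
    ∃ s : Finset V, ↑s ⊆ S ∧ G.IsNClique (cliqueNumOn G S) s := by
  classical
  have hne : {n | ∃ s : Finset V, ↑s ⊆ S ∧ G.IsNClique n s}.Nonempty :=
    ⟨0, ∅, by simp, by simp⟩
  have hbdd : BddAbove {n | ∃ s : Finset V, ↑s ⊆ S ∧ G.IsNClique n s} := by
    refine ⟨Fintype.card V, ?_⟩
    rintro n ⟨s, -, hs⟩
    rw [← hs.card_eq, ← Finset.card_univ]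
    exact Finset.card_le_univ s
  exact Nat.sSup_mem hne hbdd

private lemma cliqueNumOn_le {V : Type*} [Fintype V] (G : SimpleGraph V) (S : Set V)
    {n : ℕ} {s : Finset V} (hsub : ↑s ⊆ S) (hs : G.IsNClique n s) : n ≤ cliqueNumOn G S := by
  apply le_csSup
  · refine ⟨Fintype.card V, ?_⟩
    rintro m ⟨t, -, hts⟩
    rw [← hts.card_eq, ← Finset.card_univ]
    exact Finset.card_le_univ t
  · exact ⟨s, hsub, hs⟩

private lemma skeletal_cross {V : Type*} [Fintype V] {G : SimpleGraph V} {A B : Finset V}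
    (hsk : IsSkeletalPair G A B) {a a' b b' : V} (ha : a ∈ A) (ha' : a' ∈ A)
    (hb : b ∈ B) (hb' : b' ∈ B) (hne : a ≠ b')
    (e1 : G.Adj a b) (e2 : G.Adj a' b') : G.Adj a b' := by
  classical
  obtain ⟨s, hsS, hs⟩ := cliqueNumOn_exists G (↑A ∪ ↑B : Set V)
  have key : ∀ x ∈ A, ∀ y ∈ B, G.Adj x y → x ∈ s ∧ y ∈ s := by
    intro x hx y hy hxy
    by_contra hcon
    have hdel : (G.deleteEdges {s(x, y)}).IsNClique (cliqueNumOn G (↑A ∪ ↑B)) s := by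
      refine ⟨?_, hs.card_eq⟩
      intro p hp q hq hpq
      rw [SimpleGraph.deleteEdges_adj]
      refine ⟨hs.isClique hp hq hpq, ?_⟩
      simp only [Set.mem_singleton_iff, Sym2.eq_iff]
      rintro (⟨rfl, rfl⟩ | ⟨rfl, rfl⟩)
      · exact hcon ⟨Finset.mem_coe.1 hp, Finset.mem_coe.1 hq⟩
      · exact hcon ⟨Finset.mem_coe.1 hq, Finset.mem_coe.1 hp⟩
    have hle : cliqueNumOn G (↑A ∪ ↑B) ≤ cliqueNumOn (G.deleteEdges {s(x, y)}) (↑A ∪ ↑B) :=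
      cliqueNumOn_le _ _ hsS hdel
    exact absurd (hsk x hx y hy hxy) (not_lt.2 hle)
  exact hs.isClique (Finset.mem_coe.2 (key a ha b hb e1).1)
    (Finset.mem_coe.2 (key a' ha' b' hb' e2).2) hne

set_option maxHeartbeats 2000000 in
theorem stmt14 {V : Type*} [Fintype V] (b24 b75 : Bool)
    (M : Set (Sym2 (Fin 9)))
    (hM13 : s((0 : Fin 9), 2) ∈ M) (hM68 : s((5 : Fin 9), 7) ∈ M)
    (hMsub : M ⊆ {s((0 : Fin 9), 2), s(5, 7), s(1, 3), s(4, 6)})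
    (hMedge : M ⊆ (exIIG b24 b75).edgeSet)
    (hMmatch : IsMatchingSet M)
    (X : Finset (Fin 9)) (hX : X ⊆ {2, 3, 4, 5})
    (hv2 : ∃ w ∈ ({2, 3, 4, 5, 8} : Finset (Fin 9)), w ∉ X ∧ (exIIG b24 b75).Adj 1 w)
    (hv7 : ∃ w ∈ ({2, 3, 4, 5, 8} : Finset (Fin 9)), w ∉ X ∧ (exIIG b24 b75).Adj 6 w)
    (hcond : (3 : Fin 9) ∉ X → (4 : Fin 9) ∉ X →
      (exIIG b24 b75).Adj 1 3 ∧ (exIIG b24 b75).Adj 6 4)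
    (htriads : ∀ w : Fin 9, w ∉ X → ∃ T : Finset (Fin 9),
      (↑T : Set (Fin 9)) ⊆ (↑X : Set (Fin 9))ᶜ ∧
      IsTriad ((exIIG b24 b75).deleteEdges M) T ∧ w ∈ T)
    (G' : SimpleGraph V) (f : V → Fin 9)
    (ht : IsThickeningOn (exIIG b24 b75) M ((↑X : Set (Fin 9))ᶜ) G' f)
    (hws : WeaklySkeletal G'
      {v | f v = 0 ∨ f v = 1}
      {v | f v = 6 ∨ f v = 7}
      {v | (f v = 2 ∨ f v = 3 ∨ f v = 4 ∨ f v = 5 ∨ f v = 8) ∧ f v ∉ X}) :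
    ∃ T : Finset V, GoodTriad G' T := by
  classical
  -- basic facts about X
  have hXn : ∀ c : Fin 9, c ∉ ({2, 3, 4, 5} : Finset (Fin 9)) → c ∉ X := fun c hc h => hc (hX h)
  have hR : ∀ c : Fin 9, c ∉ X → c ∈ ((↑X : Set (Fin 9))ᶜ) := fun c hc => by simpa using hc
  have h1X : (1 : Fin 9) ∉ X := hXn 1 (by decide)
  have h6X : (6 : Fin 9) ∉ X := hXn 6 (by decide)
  have h8X : (8 : Fin 9) ∉ X := hXn 8 (by decide)
  -- helpers from the thickening
  have adjh : ∀ (a b : V) (p q : Fin 9), f a = p → f b = q → p ≠ q →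
      (exIIG b24 b75).Adj p q → s(p, q) ∉ M → G'.Adj a b := by
    intro a b p q hp hq hne hadj hM
    exact ht.adj_of_adj a trivial b trivial (by rw [hp, hq]; exact hne)
      (by rw [hp, hq]; exact hadj) (by rw [hp, hq]; exact hM)
  have nadjh : ∀ (a b : V) (p q : Fin 9), f a = p → f b = q → p ≠ q →
      ¬(exIIG b24 b75).Adj p q → ¬G'.Adj a b := fun a b p q hp hq hne hnadj =>
    ht.nonadj_of_nonadj a trivial b trivial (by rw [hp, hq]; exact hne)
      (by rw [hp, hq]; exact hnadj)
  have baseadj : ∀ (a b : V) (p q : Fin 9), f a = p → f b = q → p ≠ q → G'.Adj a b →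
      (exIIG b24 b75).Adj p q := by
    intro a b p q hp hq hne hadj
    by_contra hn
    exact nadjh a b p q hp hq hne hn hadj
  have fclique : ∀ (a b : V) (c : Fin 9), f a = c → f b = c → a ≠ b → G'.Adj a b := by
    intro a b c hac hbc hne
    exact ht.fibers_clique c ⟨trivial, hac⟩ ⟨trivial, hbc⟩ hne
  have fne : ∀ (a b : V) (p q : Fin 9), f a = p → f b = q → p ≠ q → a ≠ b := by
    intro a b p q hp hq hne heq
    rw [heq, hq] at hp
    exact hne hp.symm
  -- facts about M
  have hMn : ∀ i j : Fin 9, s(i, j) ∈ M →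
      (i = 0 ∧ j = 2 ∨ i = 2 ∧ j = 0) ∨ (i = 5 ∧ j = 7 ∨ i = 7 ∧ j = 5) ∨
      (i = 1 ∧ j = 3 ∨ i = 3 ∧ j = 1) ∨ i = 4 ∧ j = 6 ∨ i = 6 ∧ j = 4 := by
    intro i j h
    have h' := hMsub h
    simp only [Set.mem_insert_iff, Set.mem_singleton_iff, Sym2.eq_iff] at h'
    exact h'
  have hMno : ∀ p q : Fin 9,
      ¬((p = 0 ∧ q = 2 ∨ p = 2 ∧ q = 0) ∨ (p = 5 ∧ q = 7 ∨ p = 7 ∧ q = 5) ∨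
        (p = 1 ∧ q = 3 ∨ p = 3 ∧ q = 1) ∨ p = 4 ∧ q = 6 ∨ p = 6 ∧ q = 4) →
      s(p, q) ∉ M := fun p q hno h => hno (hMn p q h)
  -- nonempty fibers
  obtain ⟨u0, -, hu0⟩ := ht.fibers_nonempty 1 (hR 1 h1X)
  obtain ⟨v0, -, hv0⟩ := ht.fibers_nonempty 6 (hR 6 h6X)
  obtain ⟨w, -, hw⟩ := ht.fibers_nonempty 8 (hR 8 h8X)
  -- the apex of the fiber of 1 towards the fiber of 3
  have apex13 : ∃ u : V, f u = 1 ∧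
      ∀ z y : V, f z = 1 → f y = 3 → G'.Adj z y → G'.Adj u y := by
    by_cases hE : ∃ z y : V, f z = 1 ∧ f y = 3 ∧ G'.Adj z y
    · obtain ⟨z0, y0, hz0, hy0, hzy0⟩ := hE
      by_cases hMe : s((1 : Fin 9), 3) ∈ M
      · -- use weak skeletality
        set A : Finset V := Finset.univ.filter (fun x => f x = 1) with hA
        set B : Finset V := Finset.univ.filter (fun x => f x = 3) with hB
        have hmemA : ∀ x : V, x ∈ A ↔ f x = 1 := by intro x; simp [hA]
        have hmemB : ∀ x : V, x ∈ B ↔ f x = 3 := by intro x; simp [hB]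
        have h3X : (3 : Fin 9) ∉ X := by
          have h := ht.maps_into y0 trivial
          rw [hy0] at h
          simpa using h
        have hdisj : Disjoint A B := by
          rw [Finset.disjoint_left]
          intro x hx hx'
          rw [hmemA] at hx
          rw [hmemB] at hx'
          rw [hx] at hx'
          exact absurd hx' (by decide)
        have hcard : 3 ≤ A.card + B.card := by
          by_contra hlt
          push_neg at hlt
          have hA1 : 1 ≤ A.card := Finset.card_pos.2 ⟨z0, (hmemA z0).2 hz0⟩
          have hB1 : 1 ≤ B.card := Finset.card_pos.2 ⟨y0, (hmemB y0).2 hy0⟩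
          obtain ⟨a, ha⟩ := Finset.card_eq_one.1 (by omega : A.card = 1)
          obtain ⟨b, hb⟩ := Finset.card_eq_one.1 (by omega : B.card = 1)
          obtain ⟨u', -, v', -, hu', hv', hnadj⟩ :=
            ht.semi_nonadj 1 (hR 1 h1X) 3 (hR 3 h3X) hMe
          have e1 : u' = a := Finset.mem_singleton.1 (ha ▸ (hmemA u').2 hu')
          have e2 : z0 = a := Finset.mem_singleton.1 (ha ▸ (hmemA z0).2 hz0)
          have e3 : v' = b := Finset.mem_singleton.1 (hb ▸ (hmemB v').2 hv')
          have e4 : y0 = b := Finset.mem_singleton.1 (hb ▸ (hmemB y0).2 hy0)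
          rw [e1, e3] at hnadj
          rw [e2, e4] at hzy0
          exact hnadj hzy0
        have hhom : IsHomPair G' A B := by
          refine ⟨Set.subset_univ _, Set.subset_univ _, ?_, ?_,
            ⟨z0, (hmemA z0).2 hz0⟩, ⟨y0, (hmemB y0).2 hy0⟩, hdisj, hcard, ?_⟩
          · intro x hx y hy hne
            exact fclique x y 1 ((hmemA x).1 (Finset.mem_coe.1 hx))
              ((hmemA y).1 (Finset.mem_coe.1 hy)) hne
          · intro x hx y hy hne
            exact fclique x y 3 ((hmemB x).1 (Finset.mem_coe.1 hx))
              ((hmemB y).1 (Finset.mem_coe.1 hy)) hne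
          · intro x _ hxA hxB
            have hx1 : f x ≠ 1 := fun h => hxA ((hmemA x).2 h)
            have hx3 : f x ≠ 3 := fun h => hxB ((hmemB x).2 h)
            rcases fin9_cases (f x) with h | h | h | h | h | h | h | h | h
            · constructor
              · exact Or.inl fun a ha =>
                  adjh x a 0 1 h ((hmemA a).1 ha) (by decide) (eA01 b24 b75) (hMno 0 1 (by decide))
              · exact Or.inr fun b hb =>
                  nadjh x b 0 3 h ((hmemB b).1 hb) (by decide) (eN03 b24 b75)
            · exact absurd h hx1
            · constructor
              · exact Or.inl fun a ha =>
                  adjh x a 2 1 h ((hmemA a).1 ha) (by decide) (eA21 b24 b75) (hMno 2 1 (by decide))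
              · exact Or.inl fun b hb =>
                  adjh x b 2 3 h ((hmemB b).1 hb) (by decide) (eA23 b24 b75) (hMno 2 3 (by decide))
            · exact absurd h hx3
            · constructor
              · exact Or.inr fun a ha =>
                  nadjh x a 4 1 h ((hmemA a).1 ha) (by decide) (eN41 b24 b75)
              · exact Or.inl fun b hb =>
                  adjh x b 4 3 h ((hmemB b).1 hb) (by decide) (eA43 b24 b75) (hMno 4 3 (by decide))
            · constructor
              · exact Or.inr fun a ha =>
                  nadjh x a 5 1 h ((hmemA a).1 ha) (by decide) (eN51 b24 b75)
              · exact Or.inl fun b hb =>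
                  adjh x b 5 3 h ((hmemB b).1 hb) (by decide) (eA53 b24 b75) (hMno 5 3 (by decide))
            · constructor
              · exact Or.inr fun a ha =>
                  nadjh x a 6 1 h ((hmemA a).1 ha) (by decide) (eN61 b24 b75)
              · exact Or.inr fun b hb =>
                  nadjh x b 6 3 h ((hmemB b).1 hb) (by decide) (eN63 b24 b75)
            · constructor
              · exact Or.inr fun a ha =>
                  nadjh x a 7 1 h ((hmemA a).1 ha) (by decide) (eN71 b24 b75)
              · exact Or.inr fun b hb =>
                  nadjh x b 7 3 h ((hmemB b).1 hb) (by decide) (eN73 b24 b75)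
            · constructor
              · exact Or.inr fun a ha =>
                  nadjh x a 8 1 h ((hmemA a).1 ha) (by decide) (eN81 b24 b75)
              · exact Or.inl fun b hb =>
                  adjh x b 8 3 h ((hmemB b).1 hb) (by decide) (eA83 b24 b75) (hMno 8 3 (by decide))
        have hfvA : ∀ x : V, x ∈ (↑A : Set V) → f x = 1 :=
          fun x hx => (hmemA x).1 (Finset.mem_coe.1 hx)
        have hfvB : ∀ x : V, x ∈ (↑B : Set V) → f x = 3 :=
          fun x hx => (hmemB x).1 (Finset.mem_coe.1 hx)
        have hsk : IsSkeletalPair G' A B := by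
          by_contra hns
          rcases hws A B hhom hns with hstr | hstr
          · rcases hstr with ⟨-, x, hx1, hx2⟩ | ⟨-, x, hx1, hx2⟩ | ⟨⟨x, hx1, hx2⟩, -⟩
            · rcases hx2 with h | h <;> rw [hfvA x hx1] at h <;> exact absurd h (by decide)
            · rcases hx2.1 with h | h | h | h | h <;> rw [hfvA x hx1] at h <;>
                exact absurd h (by decide)
            · rcases hx2 with h | h <;> rw [hfvA x hx1] at h <;> exact absurd h (by decide)
          · rcases hstr with ⟨⟨x, hx1, hx2⟩, -⟩ | ⟨⟨x, hx1, hx2⟩, -⟩ | ⟨⟨x, hx1, hx2⟩, -⟩ <;>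
              rcases hx2 with h | h <;> rw [hfvB x hx1] at h <;> exact absurd h (by decide)
        refine ⟨z0, hz0, ?_⟩
        intro z y hz hy hadj
        exact skeletal_cross hsk ((hmemA z0).2 hz0) ((hmemA z).2 hz)
          ((hmemB y0).2 hy0) ((hmemB y).2 hy) (fne z0 y 1 3 hz0 hy (by decide)) hzy0 hadj
      · refine ⟨z0, hz0, ?_⟩
        intro z y hz hy hadj
        have hbase := baseadj z y 1 3 hz hy (by decide) hadj
        exact adjh z0 y 1 3 hz0 hy (by decide) hbase hMe
    · exact ⟨u0, hu0, fun z y hz hy hadj => absurd ⟨z, y, hz, hy, hadj⟩ hE⟩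
  -- the apex of the fiber of 6 towards the fiber of 4
  have apex64 : ∃ v : V, f v = 6 ∧
      ∀ z y : V, f z = 6 → f y = 4 → G'.Adj z y → G'.Adj v y := by
    by_cases hE : ∃ z y : V, f z = 6 ∧ f y = 4 ∧ G'.Adj z y
    · obtain ⟨z0, y0, hz0, hy0, hzy0⟩ := hE
      by_cases hMe : s((6 : Fin 9), 4) ∈ M
      · set A : Finset V := Finset.univ.filter (fun x => f x = 6) with hA
        set B : Finset V := Finset.univ.filter (fun x => f x = 4) with hB
        have hmemA : ∀ x : V, x ∈ A ↔ f x = 6 := by intro x; simp [hA]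
        have hmemB : ∀ x : V, x ∈ B ↔ f x = 4 := by intro x; simp [hB]
        have h4X : (4 : Fin 9) ∉ X := by
          have h := ht.maps_into y0 trivial
          rw [hy0] at h
          simpa using h
        have hdisj : Disjoint A B := by
          rw [Finset.disjoint_left]
          intro x hx hx'
          rw [hmemA] at hx
          rw [hmemB] at hx'
          rw [hx] at hx'
          exact absurd hx' (by decide)
        have hcard : 3 ≤ A.card + B.card := by
          by_contra hlt
          push_neg at hlt
          have hA1 : 1 ≤ A.card := Finset.card_pos.2 ⟨z0, (hmemA z0).2 hz0⟩
          have hB1 : 1 ≤ B.card := Finset.card_pos.2 ⟨y0, (hmemB y0).2 hy0⟩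
          obtain ⟨a, ha⟩ := Finset.card_eq_one.1 (by omega : A.card = 1)
          obtain ⟨b, hb⟩ := Finset.card_eq_one.1 (by omega : B.card = 1)
          obtain ⟨u', -, v', -, hu', hv', hnadj⟩ :=
            ht.semi_nonadj 6 (hR 6 h6X) 4 (hR 4 h4X) hMe
          have e1 : u' = a := Finset.mem_singleton.1 (ha ▸ (hmemA u').2 hu')
          have e2 : z0 = a := Finset.mem_singleton.1 (ha ▸ (hmemA z0).2 hz0)
          have e3 : v' = b := Finset.mem_singleton.1 (hb ▸ (hmemB v').2 hv')
          have e4 : y0 = b := Finset.mem_singleton.1 (hb ▸ (hmemB y0).2 hy0)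
          rw [e1, e3] at hnadj
          rw [e2, e4] at hzy0
          exact hnadj hzy0
        have hhom : IsHomPair G' A B := by
          refine ⟨Set.subset_univ _, Set.subset_univ _, ?_, ?_,
            ⟨z0, (hmemA z0).2 hz0⟩, ⟨y0, (hmemB y0).2 hy0⟩, hdisj, hcard, ?_⟩
          · intro x hx y hy hne
            exact fclique x y 6 ((hmemA x).1 (Finset.mem_coe.1 hx))
              ((hmemA y).1 (Finset.mem_coe.1 hy)) hne
          · intro x hx y hy hne
            exact fclique x y 4 ((hmemB x).1 (Finset.mem_coe.1 hx))
              ((hmemB y).1 (Finset.mem_coe.1 hy)) hne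
          · intro x _ hxA hxB
            have hx6 : f x ≠ 6 := fun h => hxA ((hmemA x).2 h)
            have hx4 : f x ≠ 4 := fun h => hxB ((hmemB x).2 h)
            rcases fin9_cases (f x) with h | h | h | h | h | h | h | h | h
            · constructor
              · exact Or.inr fun a ha =>
                  nadjh x a 0 6 h ((hmemA a).1 ha) (by decide) (eN06 b24 b75)
              · exact Or.inr fun b hb =>
                  nadjh x b 0 4 h ((hmemB b).1 hb) (by decide) (eN04 b24 b75)
            · constructor
              · exact Or.inr fun a ha =>
                  nadjh x a 1 6 h ((hmemA a).1 ha) (by decide) (eN16 b24 b75)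
              · exact Or.inr fun b hb =>
                  nadjh x b 1 4 h ((hmemB b).1 hb) (by decide) (eN14 b24 b75)
            · constructor
              · exact Or.inr fun a ha =>
                  nadjh x a 2 6 h ((hmemA a).1 ha) (by decide) (eN26 b24 b75)
              · exact Or.inl fun b hb =>
                  adjh x b 2 4 h ((hmemB b).1 hb) (by decide) (eA24 b24 b75) (hMno 2 4 (by decide))
            · constructor
              · exact Or.inr fun a ha =>
                  nadjh x a 3 6 h ((hmemA a).1 ha) (by decide) (eN36 b24 b75)
              · exact Or.inl fun b hb =>
                  adjh x b 3 4 h ((hmemB b).1 hb) (by decide) (eA34 b24 b75) (hMno 3 4 (by decide))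
            · exact absurd h hx4
            · constructor
              · exact Or.inl fun a ha =>
                  adjh x a 5 6 h ((hmemA a).1 ha) (by decide) (eA56 b24 b75) (hMno 5 6 (by decide))
              · exact Or.inl fun b hb =>
                  adjh x b 5 4 h ((hmemB b).1 hb) (by decide) (eA54 b24 b75) (hMno 5 4 (by decide))
            · exact absurd h hx6
            · constructor
              · exact Or.inl fun a ha =>
                  adjh x a 7 6 h ((hmemA a).1 ha) (by decide) (eA76 b24 b75) (hMno 7 6 (by decide))
              · exact Or.inr fun b hb =>
                  nadjh x b 7 4 h ((hmemB b).1 hb) (by decide) (eN74 b24 b75)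
            · constructor
              · exact Or.inr fun a ha =>
                  nadjh x a 8 6 h ((hmemA a).1 ha) (by decide) (eN86 b24 b75)
              · exact Or.inl fun b hb =>
                  adjh x b 8 4 h ((hmemB b).1 hb) (by decide) (eA84 b24 b75) (hMno 8 4 (by decide))
        have hfvA : ∀ x : V, x ∈ (↑A : Set V) → f x = 6 :=
          fun x hx => (hmemA x).1 (Finset.mem_coe.1 hx)
        have hfvB : ∀ x : V, x ∈ (↑B : Set V) → f x = 4 :=
          fun x hx => (hmemB x).1 (Finset.mem_coe.1 hx)
        have hsk : IsSkeletalPair G' A B := by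
          by_contra hns
          rcases hws A B hhom hns with hstr | hstr
          · rcases hstr with ⟨⟨x, hx1, hx2⟩, -⟩ | ⟨⟨x, hx1, hx2⟩, -⟩ | ⟨-, x, hx1, hx2⟩
            · rcases hx2 with h | h <;> rw [hfvA x hx1] at h <;> exact absurd h (by decide)
            · rcases hx2 with h | h <;> rw [hfvA x hx1] at h <;> exact absurd h (by decide)
            · rcases hx2.1 with h | h | h | h | h <;> rw [hfvA x hx1] at h <;>
                exact absurd h (by decide)
          · rcases hstr with ⟨⟨x, hx1, hx2⟩, -⟩ | ⟨⟨x, hx1, hx2⟩, -⟩ | ⟨⟨x, hx1, hx2⟩, -⟩ <;>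
              rcases hx2 with h | h <;> rw [hfvB x hx1] at h <;> exact absurd h (by decide)
        refine ⟨z0, hz0, ?_⟩
        intro z y hz hy hadj
        exact skeletal_cross hsk ((hmemA z0).2 hz0) ((hmemA z).2 hz)
          ((hmemB y0).2 hy0) ((hmemB y).2 hy) (fne z0 y 6 4 hz0 hy (by decide)) hzy0 hadj
      · refine ⟨z0, hz0, ?_⟩
        intro z y hz hy hadj
        have hbase := baseadj z y 6 4 hz hy (by decide) hadj
        exact adjh z0 y 6 4 hz0 hy (by decide) hbase hMe
    · exact ⟨v0, hv0, fun z y hz hy hadj => absurd ⟨z, y, hz, hy, hadj⟩ hE⟩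
  obtain ⟨u, hu, hu3⟩ := apex13
  obtain ⟨v, hv, hv4⟩ := apex64
  have huv : u ≠ v := fne u v 1 6 hu hv (by decide)
  have huw : u ≠ w := fne u w 1 8 hu hw (by decide)
  have hvw : v ≠ w := fne v w 6 8 hv hw (by decide)
  refine ⟨{u, v, w}, Set.subset_univ _, ⟨?_, ?_⟩, ?_⟩
  · exact Finset.card_eq_three.2 ⟨u, v, w, huv, huw, hvw, rfl⟩
  · intro a ha b hb hne
    simp only [Finset.mem_insert, Finset.mem_singleton] at ha hb
    rcases ha with ha | ha | ha <;> rcases hb with hb | hb | hb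
    · exact absurd (ha.trans hb.symm) hne
    · exact nadjh a b 1 6 (by rw [ha]; exact hu) (by rw [hb]; exact hv) (by decide) (eN16 b24 b75)
    · exact nadjh a b 1 8 (by rw [ha]; exact hu) (by rw [hb]; exact hw) (by decide) (eN18 b24 b75)
    · exact nadjh a b 6 1 (by rw [ha]; exact hv) (by rw [hb]; exact hu) (by decide) (eN61 b24 b75)
    · exact absurd (ha.trans hb.symm) hne
    · exact nadjh a b 6 8 (by rw [ha]; exact hv) (by rw [hb]; exact hw) (by decide) (eN68 b24 b75)
    · exact nadjh a b 8 1 (by rw [ha]; exact hw) (by rw [hb]; exact hu) (by decide) (eN81 b24 b75)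
    · exact nadjh a b 8 6 (by rw [ha]; exact hw) (by rw [hb]; exact hv) (by decide) (eN86 b24 b75)
    · exact absurd (ha.trans hb.symm) hne
  · intro z _ hzT
    have hzu : z ≠ u := fun h => hzT (by rw [h]; simp)
    have hzv : z ≠ v := fun h => hzT (by rw [h]; simp)
    have hzw : z ≠ w := fun h => hzT (by rw [h]; simp)
    have huT : u ∈ ({u, v, w} : Finset V) := by simp
    have hvT : v ∈ ({u, v, w} : Finset V) := by simp
    have hwT : w ∈ ({u, v, w} : Finset V) := by simp
    have mem_cn : ∀ a y : V, y ∈ closedNbhdOn G' Set.univ a ↔ (y = a ∨ G'.Adj a y) := by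
      intro a y
      simp [closedNbhdOn, closedNbhd, Set.mem_insert_iff, SimpleGraph.mem_neighborSet]
    have tt : ∀ t : V, t ∈ ({u, v, w} : Finset V) →
        (∀ y : V, (y = z ∨ G'.Adj z y) → (y = t ∨ G'.Adj t y)) →
        (∃ t1 ∈ ({u, v, w} : Finset V), ∃ t2 ∈ ({u, v, w} : Finset V),
            t1 ≠ t2 ∧ G'.Adj z t1 ∧ G'.Adj z t2) ∨
        (∃ t ∈ ({u, v, w} : Finset V),
            closedNbhdOn G' Set.univ z = closedNbhdOn G' Set.univ t) ∨
        (∃ t ∈ ({u, v, w} : Finset V),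
            closedNbhdOn G' Set.univ z ⊂ closedNbhdOn G' Set.univ t) := by
      intro t htT hsub
      have hss : closedNbhdOn G' Set.univ z ⊆ closedNbhdOn G' Set.univ t := by
        intro y hy
        rw [mem_cn] at hy ⊢
        exact hsub y hy
      rcases hss.ssubset_or_eq with h | h
      · exact Or.inr (Or.inr ⟨t, htT, h⟩)
      · exact Or.inr (Or.inl ⟨t, htT, h⟩)
    rcases fin9_cases (f z) with hfz | hfz | hfz | hfz | hfz | hfz | hfz | hfz | hfz
    · exact Or.inl ⟨u, huT, w, hwT, huw,
        adjh z u 0 1 hfz hu (by decide) (eA01 b24 b75) (hMno 0 1 (by decide)),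
        adjh z w 0 8 hfz hw (by decide) (eA08 b24 b75) (hMno 0 8 (by decide))⟩
    · apply tt u huT
      rintro y (rfl | hy)
      · exact Or.inr (fclique u y 1 hu hfz (Ne.symm hzu))
      · rcases fin9_cases (f y) with hfy | hfy | hfy | hfy | hfy | hfy | hfy | hfy | hfy
        · exact Or.inr (adjh u y 1 0 hu hfy (by decide) (eA10 b24 b75) (hMno 1 0 (by decide)))
        · by_cases hyu : y = u
          · exact Or.inl hyu
          · exact Or.inr (fclique u y 1 hu hfy (Ne.symm hyu))
        · exact Or.inr (adjh u y 1 2 hu hfy (by decide) (eA12 b24 b75) (hMno 1 2 (by decide)))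
        · exact Or.inr (hu3 z y hfz hfy hy)
        · exact absurd (baseadj z y 1 4 hfz hfy (by decide) hy) (eN14 b24 b75)
        · exact absurd (baseadj z y 1 5 hfz hfy (by decide) hy) (eN15 b24 b75)
        · exact absurd (baseadj z y 1 6 hfz hfy (by decide) hy) (eN16 b24 b75)
        · exact absurd (baseadj z y 1 7 hfz hfy (by decide) hy) (eN17 b24 b75)
        · exact absurd (baseadj z y 1 8 hfz hfy (by decide) hy) (eN18 b24 b75)
    · exact Or.inl ⟨u, huT, w, hwT, huw,
        adjh z u 2 1 hfz hu (by decide) (eA21 b24 b75) (hMno 2 1 (by decide)),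
        adjh z w 2 8 hfz hw (by decide) (eA28 b24 b75) (hMno 2 8 (by decide))⟩
    · by_cases hnb : ∃ y : V, f y = 1 ∧ G'.Adj z y
      · obtain ⟨y, hy1, hzy⟩ := hnb
        have huz : G'.Adj u z := hu3 y z hy1 hfz hzy.symm
        exact Or.inl ⟨u, huT, w, hwT, huw, huz.symm,
          adjh z w 3 8 hfz hw (by decide) (eA38 b24 b75) (hMno 3 8 (by decide))⟩
      · apply tt w hwT
        rintro y (rfl | hy)
        · exact Or.inr (adjh w y 8 3 hw hfz (by decide) (eA83 b24 b75) (hMno 8 3 (by decide)))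
        · rcases fin9_cases (f y) with hfy | hfy | hfy | hfy | hfy | hfy | hfy | hfy | hfy
          · exact absurd (baseadj z y 3 0 hfz hfy (by decide) hy) (eN30 b24 b75)
          · exact absurd ⟨y, hfy, hy⟩ hnb
          · exact Or.inr (adjh w y 8 2 hw hfy (by decide) (eA82 b24 b75) (hMno 8 2 (by decide)))
          · exact Or.inr (adjh w y 8 3 hw hfy (by decide) (eA83 b24 b75) (hMno 8 3 (by decide)))
          · exact Or.inr (adjh w y 8 4 hw hfy (by decide) (eA84 b24 b75) (hMno 8 4 (by decide)))
          · exact Or.inr (adjh w y 8 5 hw hfy (by decide) (eA85 b24 b75) (hMno 8 5 (by decide)))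
          · exact absurd (baseadj z y 3 6 hfz hfy (by decide) hy) (eN36 b24 b75)
          · exact absurd (baseadj z y 3 7 hfz hfy (by decide) hy) (eN37 b24 b75)
          · by_cases hyw : y = w
            · exact Or.inl hyw
            · exact Or.inr (fclique w y 8 hw hfy (Ne.symm hyw))
    · by_cases hnb : ∃ y : V, f y = 6 ∧ G'.Adj z y
      · obtain ⟨y, hy6, hzy⟩ := hnb
        have hvz : G'.Adj v z := hv4 y z hy6 hfz hzy.symm
        exact Or.inl ⟨v, hvT, w, hwT, hvw, hvz.symm,
          adjh z w 4 8 hfz hw (by decide) (eA48 b24 b75) (hMno 4 8 (by decide))⟩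
      · apply tt w hwT
        rintro y (rfl | hy)
        · exact Or.inr (adjh w y 8 4 hw hfz (by decide) (eA84 b24 b75) (hMno 8 4 (by decide)))
        · rcases fin9_cases (f y) with hfy | hfy | hfy | hfy | hfy | hfy | hfy | hfy | hfy
          · exact absurd (baseadj z y 4 0 hfz hfy (by decide) hy) (eN40 b24 b75)
          · exact absurd (baseadj z y 4 1 hfz hfy (by decide) hy) (eN41 b24 b75)
          · exact Or.inr (adjh w y 8 2 hw hfy (by decide) (eA82 b24 b75) (hMno 8 2 (by decide)))
          · exact Or.inr (adjh w y 8 3 hw hfy (by decide) (eA83 b24 b75) (hMno 8 3 (by decide)))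
          · exact Or.inr (adjh w y 8 4 hw hfy (by decide) (eA84 b24 b75) (hMno 8 4 (by decide)))
          · exact Or.inr (adjh w y 8 5 hw hfy (by decide) (eA85 b24 b75) (hMno 8 5 (by decide)))
          · exact absurd ⟨y, hfy, hy⟩ hnb
          · exact absurd (baseadj z y 4 7 hfz hfy (by decide) hy) (eN47 b24 b75)
          · by_cases hyw : y = w
            · exact Or.inl hyw
            · exact Or.inr (fclique w y 8 hw hfy (Ne.symm hyw))
    · exact Or.inl ⟨v, hvT, w, hwT, hvw,
        adjh z v 5 6 hfz hv (by decide) (eA56 b24 b75) (hMno 5 6 (by decide)),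
        adjh z w 5 8 hfz hw (by decide) (eA58 b24 b75) (hMno 5 8 (by decide))⟩
    · apply tt v hvT
      rintro y (rfl | hy)
      · exact Or.inr (fclique v y 6 hv hfz (Ne.symm hzv))
      · rcases fin9_cases (f y) with hfy | hfy | hfy | hfy | hfy | hfy | hfy | hfy | hfy
        · exact absurd (baseadj z y 6 0 hfz hfy (by decide) hy) (eN60 b24 b75)
        · exact absurd (baseadj z y 6 1 hfz hfy (by decide) hy) (eN61 b24 b75)
        · exact absurd (baseadj z y 6 2 hfz hfy (by decide) hy) (eN62 b24 b75)
        · exact absurd (baseadj z y 6 3 hfz hfy (by decide) hy) (eN63 b24 b75)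
        · exact Or.inr (hv4 z y hfz hfy hy)
        · exact Or.inr (adjh v y 6 5 hv hfy (by decide) (eA65 b24 b75) (hMno 6 5 (by decide)))
        · by_cases hyv : y = v
          · exact Or.inl hyv
          · exact Or.inr (fclique v y 6 hv hfy (Ne.symm hyv))
        · exact Or.inr (adjh v y 6 7 hv hfy (by decide) (eA67 b24 b75) (hMno 6 7 (by decide)))
        · exact absurd (baseadj z y 6 8 hfz hfy (by decide) hy) (eN68 b24 b75)
    · exact Or.inl ⟨v, hvT, w, hwT, hvw,
        adjh z v 7 6 hfz hv (by decide) (eA76 b24 b75) (hMno 7 6 (by decide)),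
        adjh z w 7 8 hfz hw (by decide) (eA78 b24 b75) (hMno 7 8 (by decide))⟩
    · apply tt w hwT
      rintro y (rfl | hy)
      · exact Or.inr (fclique w y 8 hw hfz (Ne.symm hzw))
      · rcases fin9_cases (f y) with hfy | hfy | hfy | hfy | hfy | hfy | hfy | hfy | hfy
        · exact Or.inr (adjh w y 8 0 hw hfy (by decide) (eA80 b24 b75) (hMno 8 0 (by decide)))
        · exact absurd (baseadj z y 8 1 hfz hfy (by decide) hy) (eN81 b24 b75)
        · exact Or.inr (adjh w y 8 2 hw hfy (by decide) (eA82 b24 b75) (hMno 8 2 (by decide)))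
        · exact Or.inr (adjh w y 8 3 hw hfy (by decide) (eA83 b24 b75) (hMno 8 3 (by decide)))
        · exact Or.inr (adjh w y 8 4 hw hfy (by decide) (eA84 b24 b75) (hMno 8 4 (by decide)))
        · exact Or.inr (adjh w y 8 5 hw hfy (by decide) (eA85 b24 b75) (hMno 8 5 (by decide)))
        · exact absurd (baseadj z y 8 6 hfz hfy (by decide) hy) (eN86 b24 b75)
        · exact Or.inr (adjh w y 8 7 hw hfy (by decide) (eA87 b24 b75) (hMno 8 7 (by decide)))
        · by_cases hyw : y = w
          · exact Or.inl hyw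
          · exact Or.inr (fclique w y 8 hw hfy (Ne.symm hyw))

end Paper
end
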